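/- arXiv:1205.2286 — 8 statements merged into one kernel-verified Lean document; each statement's English description precedes it below -/
import Mathlib

section
/- Let A_0, A_1, …, A_d be real symmetric n×n matrices, write A(x) = A_0 + x_1 A_1 + ⋯ + x_d A_d, and suppose A(x⁰) is positive definite for some x⁰ ∈ ℝ^d. Then the spectrahedron {x ∈ ℝ^d : A(x) ⪰ 0} equals the closure in ℝ^d of the connected component of x⁰ in the set {x ∈ ℝ^d : det A(x) > 0}. -/
/-!
Write `S`, `P` for the parameters where `A(x)` is positive semidefinite, resp. positive
definite. Since `A` is affine, `P` is convex, hence connected, and it lies in `{det A > 0}`;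
so `P` is contained in the component `C` of `x⁰`. Conversely `P` is open, and it is closed
in `{det A > 0}` because a positive semidefinite matrix with nonzero determinant is positive
definite; so `C = P`. Finally `closure P = S`: `S` is closed, and every `x ∈ S` is the limit
of the points of the open segment from `x` to `x⁰`, which lie in `P`.
-/

open Matrix Set

namespace Matrix

theorem convex_setOf_posDef {n : Type*} : Convex ℝ {B : Matrix n n ℝ | B.PosDef} :=
  convex_iff_pairwise_pos.mpr fun _ hA _ hB _ _ _ ha hb _ =>
    (hA.smul ha).add (hB.smul hb)

variable {n : Type*} [Fintype n]

theorem IsHermitian.posDef_iff_forall_mem_sphere {B : Matrix n n ℝ} (hB : B.IsHermitian) :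
    B.PosDef ↔ ∀ y ∈ Metric.sphere (0 : n → ℝ) 1, 0 < y ⬝ᵥ B *ᵥ y := by
  refine ⟨fun h y hy => ?_, fun h => .of_dotProduct_mulVec_pos hB fun y hy => ?_⟩
  · simpa using h.dotProduct_mulVec_pos (ne_zero_of_mem_unit_sphere ⟨y, hy⟩)
  · have hy' : 0 ≤ ‖y‖⁻¹ := inv_nonneg.mpr (norm_nonneg y)
    have hq := h (‖y‖⁻¹ • y) (by simp [norm_smul, norm_ne_zero_iff.mpr hy])
    simp only [mulVec_smul, dotProduct_smul, smul_dotProduct, smul_eq_mul] at hq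
    simpa using pos_of_mul_pos_right (pos_of_mul_pos_right hq hy') hy'

variable {X : Type*} [TopologicalSpace X] {M : X → Matrix n n ℝ}

theorem isClosed_setOf_posSemidef (hM : Continuous M) :
    IsClosed {x | (M x).PosSemidef} := by
  have : {x | (M x).PosSemidef} =
      {x | (M x)ᴴ = M x} ∩ ⋂ y : n → ℝ, {x | 0 ≤ y ⬝ᵥ M x *ᵥ y} := by
    ext x
    simp [posSemidef_iff_dotProduct_mulVec, IsHermitian]
  rw [this]
  exact (isClosed_eq (by fun_prop) hM).inter <|
    isClosed_iInter fun y => isClosed_le (by fun_prop) (by fun_prop)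

theorem isOpen_setOf_posDef (hM : Continuous M) (hH : ∀ x, (M x).IsHermitian) :
    IsOpen {x | (M x).PosDef} := by
  simp only [fun x => (hH x).posDef_iff_forall_mem_sphere, isOpen_iff_eventually]
  intro x hx
  refine (isCompact_sphere 0 1).eventually_forall_of_forall_eventually fun y hy => ?_
  have : Continuous fun p : X × (n → ℝ) => p.2 ⬝ᵥ M p.1 *ᵥ p.2 := by fun_prop
  exact this.continuousAt.eventually_const_lt (hx y hy)

theorem connectedComponentIn_det_pos_eq_setOf_posDef [DecidableEq n] (hM : Continuous M)
    (hH : ∀ x, (M x).IsHermitian) {x₀ : X} (hx₀ : (M x₀).PosDef)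
    (hP : IsPreconnected {x | (M x).PosDef}) :
    connectedComponentIn {x | 0 < (M x).det} x₀ = {x | (M x).PosDef} := by
  refine Subset.antisymm ?_ (hP.subset_connectedComponentIn hx₀ fun x hx => hx.det_pos)
  refine isPreconnected_connectedComponentIn.subset_left_of_subset_union
    (isOpen_setOf_posDef hM hH) (isClosed_setOf_posSemidef hM).isOpen_compl
    (disjoint_compl_right_iff_subset.mpr fun x hx => hx.posSemidef) (fun x hx => ?_)
    ⟨x₀, mem_connectedComponentIn hx₀.det_pos, hx₀⟩
  by_cases hS : (M x).PosSemidef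
  · exact Or.inl <| hS.posDef_iff_det_ne_zero.mpr (connectedComponentIn_subset _ _ hx).ne'
  · exact Or.inr hS

end Matrix

namespace AffineMap

variable {E : Type*} [AddCommGroup E] [Module ℝ E] [TopologicalSpace E] [ContinuousAdd E]
  [ContinuousSMul ℝ E] {n : Type*} (M : E →ᵃ[ℝ] Matrix n n ℝ)

theorem setOf_posSemidef_subset_closure_setOf_posDef {x₀ : E} (hx₀ : (M x₀).PosDef) :
    {x | (M x).PosSemidef} ⊆ closure {x | (M x).PosDef} := by
  intro x hx
  refine closure_mono ?_ (segment_subset_closure_openSegment (left_mem_segment ℝ x x₀))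
  rintro _ ⟨a, b, ha, hb, hab, rfl⟩
  show (M _).PosDef
  rw [Convex.combo_affine_apply hab]
  exact PosDef.posSemidef_add (hx.smul ha.le) (hx₀.smul hb)

theorem setOf_posSemidef_eq_closure_connectedComponentIn [Fintype n] [DecidableEq n]
    (hM : Continuous M) (hH : ∀ x, (M x).IsHermitian) {x₀ : E} (hx₀ : (M x₀).PosDef) :
    {x | (M x).PosSemidef} =
      closure (connectedComponentIn {x | 0 < (M x).det} x₀) := by
  rw [Matrix.connectedComponentIn_det_pos_eq_setOf_posDef hM hH hx₀
    (Matrix.convex_setOf_posDef.affine_preimage M).isPreconnected]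
  exact (setOf_posSemidef_subset_closure_setOf_posDef M hx₀).antisymm <|
    (Matrix.isClosed_setOf_posSemidef hM).closure_subset_iff.mpr fun x hx => hx.posSemidef

end AffineMap

/-- The spectrahedron defined by real symmetric matrices `A_0, …, A_d` with
`A(x⁰) ≻ 0` equals the closure of the connected component of `x⁰` in
`{x : det A(x) > 0}`. -/
theorem stmt1 {d n : ℕ} (A0 : Matrix (Fin n) (Fin n) ℝ)
    (A : Fin d → Matrix (Fin n) (Fin n) ℝ)
    (hA0 : A0.IsSymm) (hA : ∀ i, (A i).IsSymm)
    (x0 : Fin d → ℝ) (hpd : (A0 + ∑ i, x0 i • A i).PosDef) :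
    {x : Fin d → ℝ | (A0 + ∑ i, x i • A i).PosSemidef} =
      closure (connectedComponentIn
        {x : Fin d → ℝ | 0 < (A0 + ∑ i, x i • A i).det} x0) := by
  set M : (Fin d → ℝ) →ᵃ[ℝ] Matrix (Fin n) (Fin n) ℝ :=
    AffineMap.const ℝ _ A0 + (Fintype.linearCombination ℝ A).toAffineMap
  have hM : ∀ x, M x = A0 + ∑ i, x i • A i := fun x => by
    simp [M, Fintype.linearCombination_apply]
  have hH : ∀ x, (M x).IsHermitian := fun x => by
    rw [hM]
    exact (isHermitian_iff_isSymm.mpr hA0).add <| isSelfAdjoint_sum _ fun i _ =>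
      (isHermitian_iff_isSymm.mpr (hA i)).smul (IsSelfAdjoint.all (x i))
  have hcont : Continuous M := by
    rw [show ⇑M = fun x => A0 + ∑ i, x i • A i from funext hM]
    fun_prop
  simpa only [hM] using M.setOf_posSemidef_eq_closure_connectedComponentIn hcont hH (by rwa [hM])
end

section
/- Let p ∈ ℝ[x_1,…,x_d] be an RZ_{x⁰} polynomial of degree m with p(x⁰) > 0, and let 1 ≤ k ≤ m−1. Then the k-th Renegar derivative p^{(k)}_{x⁰} of p with respect to x⁰ is an RZ_{x⁰} polynomial and p^{(k)}_{x⁰}(x⁰) > 0. -/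
/-- A polynomial `p ∈ ℝ[x_1,…,x_d]` satisfies the real zero condition with respect to
`x⁰ ∈ ℝ^d` if for every `x ∈ ℝ^d`, every complex zero of the univariate polynomial
`t ↦ p(x⁰ + t·x)` is real. -/
def IsRZ {d : ℕ} (p : MvPolynomial (Fin d) ℝ) (x0 : Fin d → ℝ) : Prop :=
  ∀ x : Fin d → ℝ, ∀ t : ℂ,
    MvPolynomial.aeval (fun i => (x0 i : ℂ) + t * (x i : ℂ)) p = 0 → t.im = 0

/-- The homogenization `P(X_0, X_1, …, X_d) = X_0^m · p(X_1/X_0, …, X_d/X_0)` of a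
polynomial `p` of degree (at most) `m`; the variable `0 : Fin (d+1)` is the
homogenizing variable `X_0` and the variable `i.succ` corresponds to `x_i`. -/
noncomputable def homogenize {d : ℕ} (m : ℕ) (p : MvPolynomial (Fin d) ℝ) :
    MvPolynomial (Fin (d + 1)) ℝ :=
  ∑ k ∈ p.support,
    MvPolynomial.monomial
      (Finsupp.mapDomain Fin.succ k + Finsupp.single 0 (m - k.sum fun _ e => e))
      (MvPolynomial.coeff k p)

/-- The `k`-th Renegar derivative of `p` (of degree `m`) with respect to `x⁰`:
`p^{(k)}_{x⁰}(x) = (d^k/ds^k) P(X + sX⁰)|_{s=0}` evaluated at `X = (1, x)`, where `P`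
is the homogenization of `p` and `X⁰ = (1, x⁰)`. -/
noncomputable def renegarDeriv {d : ℕ} (m : ℕ) (p : MvPolynomial (Fin d) ℝ)
    (x0 : Fin d → ℝ) (k : ℕ) : MvPolynomial (Fin d) ℝ :=
  MvPolynomial.aeval (Fin.cons (1 : MvPolynomial (Fin d) ℝ) MvPolynomial.X)
    (Polynomial.eval 0
      ((fun q => Polynomial.derivative q)^[k]
        (MvPolynomial.aeval
          (fun α => Polynomial.C (MvPolynomial.X α) +
            Polynomial.X * Polynomial.C (MvPolynomial.C (Fin.cons (1 : ℝ) x0 α)))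
          (homogenize m p))))

/-!
Restrict to a line: for `x ∈ ℝ^d`, the univariate polynomial `f(t) = p(x⁰ + t x)` has degree
at most `m`, only real roots, and `f(0) = p(x⁰) > 0`. Since the homogenization `P` is homogeneous
of degree `m`, `P((1, x⁰ + t x) + s (1, x⁰)) = ∑ⱼ fⱼ tʲ (1 + s)^(m - j)`, so
`p^{(k)}_{x⁰}(x⁰ + t x) = ∑ⱼ (m - j)(m - j - 1)⋯(m - j - k + 1) fⱼ tʲ`. This polynomial in `t`
arises from `f` by reversing its coefficients, differentiating `k` times and reversing again;
reversal preserves real-rootedness because the nonzero roots are inverted, and differentiation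
preserves it by the Gauss–Lucas theorem. At `t = 0` it takes the value
`m(m - 1)⋯(m - k + 1) p(x⁰) > 0`.
-/

open Polynomial hiding homogenize

def RealRooted (f : ℝ[X]) : Prop :=
  ∀ z : ℂ, aeval z f = 0 → z.im = 0

namespace RealRooted

variable {f : ℝ[X]}

theorem derivative (hf : RealRooted f) (hdeg : 0 < f.natDegree) :
    RealRooted (derivative f) := by
  intro z hz
  set F := f.map (algebraMap ℝ ℂ)
  have hF : 0 < F.degree := by
    rw [degree_map]
    exact natDegree_pos_iff_degree_pos.mp hdeg
  have hzF : z ∈ (Polynomial.derivative F).rootSet ℂ := by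
    rw [mem_rootSet, derivative_map, aeval_map_algebraMap]
    refine ⟨?_, hz⟩
    rw [Ne, Polynomial.map_eq_zero_iff (algebraMap ℝ ℂ).injective, derivative_eq_zero]
    omega
  have hroots : F.rootSet ℂ ⊆ {w : ℂ | w.im = 0} := fun w hw =>
    hf w (by simpa [F, aeval_map_algebraMap] using (mem_rootSet.mp hw).2)
  exact convexHull_min hroots (convex_hyperplane (.mk Complex.add_im Complex.smul_im) 0)
    (rootSet_derivative_subset_convexHull_rootSet hF hzF)

theorem iterate_derivative (hf : RealRooted f) {k : ℕ} (hk : k ≤ f.natDegree) :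
    RealRooted (Polynomial.derivative^[k] f) := by
  induction k generalizing f with
  | zero => exact hf
  | succ k ih =>
    rw [Function.iterate_succ_apply]
    exact ih (hf.derivative (by omega)) (by rw [natDegree_derivative]; omega)

theorem reflect (hf : RealRooted f) {N : ℕ} (hN : f.natDegree ≤ N) :
    RealRooted (Polynomial.reflect N f) := by
  intro z hz
  rcases eq_or_ne z 0 with rfl | hz0
  · rfl
  let _ : Invertible z⁻¹ := invertibleOfNonzero (inv_ne_zero hz0)
  have hroot : aeval z⁻¹ f = 0 := by
    rw [aeval_def, ← eval₂_reflect_eq_zero_iff _ _ N f hN, invOf_eq_inv, inv_inv]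
    exact hz
  simpa [Complex.inv_im, hz0] using hf _ hroot

end RealRooted

/-- The Renegar derivative with respect to `0` of a univariate polynomial of degree `≤ m`:
`reflect m f = X^m f(1/X)` is its homogenization with the homogenizing variable renamed `X`,
the derivatives are taken in that variable, and `reflect (m - k)` dehomogenizes. -/
noncomputable def univariateRenegarDeriv {R : Type*} [Semiring R] (m : ℕ) (f : R[X]) (k : ℕ) :
    R[X] :=
  Polynomial.reflect (m - k) (Polynomial.derivative^[k] (Polynomial.reflect m f))

section univariateRenegarDeriv

variable {R : Type*} [CommSemiring R] {m k : ℕ} {f : R[X]}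

theorem natDegree_univariateRenegarDeriv_le (hf : f.natDegree ≤ m) :
    (univariateRenegarDeriv m f k).natDegree ≤ m - k := by
  have hrefl : (Polynomial.reflect m f).natDegree ≤ m :=
    natDegree_reflect_le.trans (max_le le_rfl hf)
  refine natDegree_reflect_le.trans (max_le le_rfl ?_)
  exact (natDegree_iterate_derivative _ _).trans (Nat.sub_le_sub_right hrefl k)

theorem coeff_univariateRenegarDeriv (hf : f.natDegree ≤ m) (hk : k ≤ m) (j : ℕ) :
    (univariateRenegarDeriv m f k).coeff j = (m - j).descFactorial k * f.coeff j := by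
  rw [univariateRenegarDeriv, coeff_reflect, coeff_iterate_derivative, coeff_reflect]
  by_cases hj : j ≤ m - k
  · rw [revAt_le hj, show m - k - j + k = m - j by omega, revAt_le (by omega),
      Nat.sub_sub_self (by omega), nsmul_eq_mul]
  · have hcoeff : f.coeff (j + k) = 0 := coeff_eq_zero_of_natDegree_lt (by omega)
    rw [revAt_eq_self_of_lt (by omega), revAt_eq_self_of_lt (by omega), hcoeff, smul_zero]
    rcases le_or_gt j m with hjm | hjm
    · rw [Nat.descFactorial_eq_zero_iff_lt.mpr (by omega), Nat.cast_zero, zero_mul]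
    · rw [coeff_eq_zero_of_natDegree_lt (by omega), mul_zero]

theorem aeval_univariateRenegarDeriv {A : Type*} [CommSemiring A] [Algebra R A]
    (hf : f.natDegree ≤ m) (hk : k ≤ m) (t : A) :
    aeval t (univariateRenegarDeriv m f k) =
      ∑ j ∈ Finset.range (m + 1),
        algebraMap R A ((m - j).descFactorial k * f.coeff j) * t ^ j := by
  rw [aeval_eq_sum_range' (n := m + 1)
    (Nat.lt_succ_of_le ((natDegree_univariateRenegarDeriv_le hf).trans (Nat.sub_le m k)))]
  simp_rw [coeff_univariateRenegarDeriv hf hk, Algebra.smul_def]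

end univariateRenegarDeriv

theorem RealRooted.univariateRenegarDeriv {f : ℝ[X]} {m k : ℕ} (hf : RealRooted f)
    (hdeg : f.natDegree ≤ m) (h0 : f.coeff 0 ≠ 0) (hk : k ≤ m) :
    RealRooted (univariateRenegarDeriv m f k) := by
  have hrefl : (Polynomial.reflect m f).natDegree = m := by
    refine le_antisymm (natDegree_reflect_le.trans (max_le le_rfl hdeg))
      (le_natDegree_of_ne_zero ?_)
    rwa [coeff_reflect, revAt_le le_rfl, Nat.sub_self]
  refine ((hf.reflect hdeg).iterate_derivative (hrefl.symm ▸ hk)).reflect ?_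
  exact (natDegree_iterate_derivative _ _).trans (by rw [hrefl])

theorem eval_zero_iterate_derivative_X_add_one_pow {R : Type*} [CommSemiring R] (n k : ℕ) :
    eval 0 (derivative^[k] ((X + 1 : R[X]) ^ n)) = n.descFactorial k := by
  simpa using congrArg (eval 0) (iterate_derivative_X_add_pow n k (1 : R))

section affineLine

variable {σ A : Type*} [CommSemiring A]

noncomputable def affineLine (a b : σ → A) : σ → A[X] :=
  fun i => C (a i) + X * C (b i)

theorem aeval_aeval_affineLine {R B : Type*} [CommSemiring R] [CommSemiring B] [Algebra R A]
    [Algebra R B] [Algebra A B] [IsScalarTower R A B] (a b : σ → A) (t : B)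
    (q : MvPolynomial σ R) :
    aeval t (MvPolynomial.aeval (affineLine a b) q) =
      MvPolynomial.aeval (fun i => algebraMap A B (a i) + t * algebraMap A B (b i)) q := by
  induction q using MvPolynomial.induction_on with
  | C r => simp [← IsScalarTower.algebraMap_apply]
  | add q r hq hr => simp [hq, hr]
  | mul_X q i hq => simp [hq, affineLine, mul_comm t]

theorem coeff_zero_aeval_affineLine (a b : σ → A) (q : MvPolynomial σ A) :
    (MvPolynomial.aeval (affineLine a b) q).coeff 0 = MvPolynomial.eval a q := by
  rw [coeff_zero_eq_aeval_zero, aeval_aeval_affineLine (R := A)]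
  simp [MvPolynomial.aeval_eq_eval]

theorem natDegree_aeval_affineLine_le (a b : σ → A) (q : MvPolynomial σ A) :
    (MvPolynomial.aeval (affineLine a b) q).natDegree ≤ q.totalDegree := by
  have hline (i : σ) : (affineLine a b i).natDegree ≤ 1 := by
    rw [affineLine, add_comm, mul_comm]
    exact natDegree_linear_le
  rw [MvPolynomial.aeval_def, MvPolynomial.eval₂_eq]
  refine natDegree_sum_le_of_forall_le _ _ fun κ hκ => (natDegree_C_mul_le _ _).trans ?_
  calc (∏ i ∈ κ.support, affineLine a b i ^ κ i).natDegree
      ≤ ∑ i ∈ κ.support, κ i * 1 :=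
        (natDegree_prod_le _ _).trans
          (Finset.sum_le_sum fun i _ => natDegree_pow_le_of_le _ (hline i))
    _ ≤ q.totalDegree := by simpa [Finsupp.sum] using MvPolynomial.le_totalDegree hκ

end affineLine

section iteratedDirDeriv

variable {R ι : Type*} [CommSemiring R]

noncomputable def iteratedDirDeriv (k : ℕ) (V : ι → R) (Q : MvPolynomial ι R) :
    MvPolynomial ι R :=
  eval 0 (derivative^[k]
    (MvPolynomial.aeval (affineLine MvPolynomial.X fun α => MvPolynomial.C (V α)) Q))

theorem aeval_iteratedDirDeriv {K : Type*} [CommSemiring K] [Algebra R K] (k : ℕ) (V : ι → R)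
    (Q : MvPolynomial ι R) (Y : ι → K) :
    MvPolynomial.aeval Y (iteratedDirDeriv k V Q) =
      eval 0 (derivative^[k]
        (MvPolynomial.aeval (affineLine Y fun α => algebraMap R K (V α)) Q)) := by
  have hmap :
      (MvPolynomial.aeval (affineLine MvPolynomial.X fun α => MvPolynomial.C (V α)) Q).map
          ((MvPolynomial.aeval Y : MvPolynomial ι R →ₐ[R] K) : MvPolynomial ι R →+* K) =
        MvPolynomial.aeval (affineLine Y fun α => algebraMap R K (V α)) Q := by
    induction Q using MvPolynomial.induction_on with
    | C r => simp
    | add q r hq hr => simp [hq, hr]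
    | mul_X q i hq => simp [hq, affineLine]
  rw [← hmap, iterate_derivative_map, eval_zero_map]
  rfl

end iteratedDirDeriv

section renegarDeriv

variable {d m k : ℕ} {p : MvPolynomial (Fin d) ℝ}

theorem renegarDeriv_eq_aeval_iteratedDirDeriv (x0 : Fin d → ℝ) :
    renegarDeriv m p x0 k =
      MvPolynomial.aeval (Fin.cons 1 MvPolynomial.X)
        (iteratedDirDeriv k (Fin.cons 1 x0) (homogenize m p)) :=
  rfl

theorem aeval_cons_smul_homogenize {A : Type*} [CommSemiring A] [Algebra ℝ A]
    (hp : p.totalDegree ≤ m) (c : A) (y : Fin d → A) :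
    MvPolynomial.aeval (Fin.cons c (c • y) : Fin (d + 1) → A) (homogenize m p) =
      c ^ m * MvPolynomial.aeval y p := by
  rw [homogenize, map_sum, MvPolynomial.aeval_def (p := p), MvPolynomial.eval₂_eq,
    Finset.mul_sum]
  refine Finset.sum_congr rfl fun κ hκ => ?_
  have hκm : κ.sum (fun _ e => e) ≤ m := (MvPolynomial.le_totalDegree hκ).trans hp
  rw [MvPolynomial.aeval_monomial,
    Finsupp.prod_add_index' (fun _ => pow_zero _) (fun _ _ _ => pow_add _ _ _),
    Finsupp.prod_single_index (h := fun i e => (Fin.cons c (c • y) : Fin (d + 1) → A) i ^ e)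
      (pow_zero _), Finsupp.prod_mapDomain_index_inj (Fin.succ_injective d)]
  simp only [Finsupp.prod, Fin.cons_succ, Fin.cons_zero, Pi.smul_apply, smul_eq_mul, mul_pow,
    Finset.prod_mul_distrib, Finset.prod_pow_eq_pow_sum]
  rw [← Nat.sub_add_cancel hκm, pow_add]
  simp only [Finsupp.sum, Nat.add_sub_cancel]
  ring

variable {K : Type*} [Field K] [CharZero K] [Algebra ℝ K]

theorem aeval_affineLine_homogenize (hp : p.totalDegree ≤ m) (x0 x : Fin d → ℝ) (t : K) :
    MvPolynomial.aeval
        (affineLine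
          (Fin.cons 1 fun i => algebraMap ℝ K (x0 i) + t * algebraMap ℝ K (x i) :
            Fin (d + 1) → K)
          fun α => algebraMap ℝ K ((Fin.cons 1 x0 : Fin (d + 1) → ℝ) α))
        (homogenize m p) =
      ∑ j ∈ Finset.range (m + 1),
        C (algebraMap ℝ K ((MvPolynomial.aeval (affineLine x0 x) p).coeff j) * t ^ j) *
          (X + 1) ^ (m - j) := by
  set f := MvPolynomial.aeval (affineLine x0 x) p
  have hf : f.natDegree ≤ m := (natDegree_aeval_affineLine_le _ _ _).trans hp
  -- Away from `s = -1` both sides are `(1 + s)^m f(t / (1 + s))`, by homogeneity.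
  refine eq_of_infinite_eval_eq _ _
    ((Set.finite_singleton (-1)).infinite_compl.mono fun s (hs : s ≠ -1) => ?_)
  have hs1 : 1 + s ≠ 0 := fun h => hs (by linear_combination h)
  have hpoint :
      (fun α => (Fin.cons 1 fun i => algebraMap ℝ K (x0 i) + t * algebraMap ℝ K (x i) :
          Fin (d + 1) → K) α + s * algebraMap ℝ K ((Fin.cons 1 x0 : Fin (d + 1) → ℝ) α)) =
        Fin.cons (1 + s)
          ((1 + s) • fun i => algebraMap ℝ K (x0 i) + t / (1 + s) * algebraMap ℝ K (x i)) := by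
    refine funext (Fin.cases (by simp) fun i => ?_)
    simp only [Fin.cons_succ, Pi.smul_apply, smul_eq_mul]
    field_simp
    ring
  show eval s _ = eval s _
  rw [eval_finsetSum]
  conv_lhs => rw [← coe_aeval_eq_eval, aeval_aeval_affineLine]
  simp only [Algebra.algebraMap_self, RingHom.id_apply]
  rw [hpoint, aeval_cons_smul_homogenize hp, ← aeval_aeval_affineLine (A := ℝ),
    aeval_eq_sum_range' (n := m + 1) (Nat.lt_succ_of_le hf), Finset.mul_sum]
  refine Finset.sum_congr rfl fun j hj => ?_
  rw [← pow_sub_mul_pow (1 + s) (Nat.lt_succ_iff.mp (Finset.mem_range.mp hj))]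
  simp only [Algebra.smul_def, map_mul, map_pow, eval_mul, eval_C, eval_pow, eval_add, eval_X,
    eval_one]
  rw [add_comm s 1, div_pow]
  field_simp

theorem aeval_affineLine_renegarDeriv (hp : p.totalDegree ≤ m) (hk : k ≤ m)
    (x0 x : Fin d → ℝ) (t : K) :
    MvPolynomial.aeval (fun i => algebraMap ℝ K (x0 i) + t * algebraMap ℝ K (x i))
        (renegarDeriv m p x0 k) =
      aeval t (univariateRenegarDeriv m (MvPolynomial.aeval (affineLine x0 x) p) k) := by
  have hcons :
      (fun α => MvPolynomial.aeval (fun i => algebraMap ℝ K (x0 i) + t * algebraMap ℝ K (x i))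
        ((Fin.cons 1 MvPolynomial.X : Fin (d + 1) → MvPolynomial (Fin d) ℝ) α)) =
      (Fin.cons 1 fun i => algebraMap ℝ K (x0 i) + t * algebraMap ℝ K (x i) : Fin (d + 1) → K) :=
    funext (Fin.cases (by simp) fun i => by simp)
  rw [renegarDeriv_eq_aeval_iteratedDirDeriv, MvPolynomial.aeval_eq_bind₁,
    MvPolynomial.aeval_bind₁, hcons, aeval_iteratedDirDeriv, aeval_affineLine_homogenize hp,
    iterate_derivative_sum, eval_finsetSum,
    aeval_univariateRenegarDeriv ((natDegree_aeval_affineLine_le _ _ _).trans hp) hk]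
  refine Finset.sum_congr rfl fun j _ => ?_
  rw [iterate_derivative_C_mul, eval_mul, eval_C, eval_zero_iterate_derivative_X_add_one_pow]
  simp only [map_mul, map_natCast]
  ring

end renegarDeriv

theorem IsRZ.realRooted_aeval_affineLine {d : ℕ} {p : MvPolynomial (Fin d) ℝ}
    {x0 : Fin d → ℝ} (h : IsRZ p x0) (x : Fin d → ℝ) :
    RealRooted (MvPolynomial.aeval (affineLine x0 x) p) :=
  fun z hz => h x z (by simpa [aeval_aeval_affineLine] using hz)

theorem stmt5_general {d m : ℕ} (p : MvPolynomial (Fin d) ℝ) (x0 : Fin d → ℝ)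
    (hdeg : p.totalDegree = m) (hRZ : IsRZ p x0)
    (hpos : 0 < MvPolynomial.eval x0 p)
    (k : ℕ) (hk2 : k ≤ m - 1) :
    IsRZ (renegarDeriv m p x0 k) x0 ∧
      0 < MvPolynomial.eval x0 (renegarDeriv m p x0 k) := by
  have hp : p.totalDegree ≤ m := hdeg.le
  have hk : k ≤ m := hk2.trans (Nat.sub_le m 1)
  have hf (x : Fin d → ℝ) : (MvPolynomial.aeval (affineLine x0 x) p).natDegree ≤ m :=
    (natDegree_aeval_affineLine_le _ _ _).trans hp
  constructor
  · intro x t ht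
    have hf0 : (MvPolynomial.aeval (affineLine x0 x) p).coeff 0 ≠ 0 := by
      rw [coeff_zero_aeval_affineLine]
      exact hpos.ne'
    refine (hRZ.realRooted_aeval_affineLine x).univariateRenegarDeriv (hf x) hf0 hk t ?_
    rw [← aeval_affineLine_renegarDeriv hp hk]
    simpa using ht
  · have hval := aeval_affineLine_renegarDeriv (K := ℝ) hp hk x0 0 0
    simp only [Pi.zero_apply, mul_zero, add_zero, Algebra.algebraMap_self, RingHom.id_apply,
      MvPolynomial.aeval_eq_eval, ← coeff_zero_eq_aeval_zero] at hval
    rw [hval, coeff_univariateRenegarDeriv (hf 0) hk, coeff_zero_aeval_affineLine]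
    have hdesc : 0 < m.descFactorial k := Nat.descFactorial_pos.mpr hk
    positivity

/-- If `p` is an `RZ_{x⁰}` polynomial of degree `m` with `p(x⁰) > 0` and
`1 ≤ k ≤ m - 1`, then the `k`-th Renegar derivative of `p` with respect to `x⁰`
is an `RZ_{x⁰}` polynomial that is positive at `x⁰`. -/
theorem stmt5 {d m : ℕ} (p : MvPolynomial (Fin d) ℝ) (x0 : Fin d → ℝ)
    (hdeg : p.totalDegree = m) (hRZ : IsRZ p x0)
    (hpos : 0 < MvPolynomial.eval x0 p)
    (k : ℕ) (hk1 : 1 ≤ k) (hk2 : k ≤ m - 1) :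
    IsRZ (renegarDeriv m p x0 k) x0 ∧
      0 < MvPolynomial.eval x0 (renegarDeriv m p x0 k) :=
  stmt5_general p x0 hdeg hRZ hpos k hk2
end

section
/- Let p ∈ ℝ[x_1,…,x_d] be any polynomial of degree m. Then there exist an integer n ≥ m and real symmetric n×n matrices A_0, A_1, …, A_d such that det(A_0 + x_1 A_1 + ⋯ + x_d A_d) = p(x) as polynomials in x_1,…,x_d. -/
/-!
A symmetric matrix `M` over `K[x]` whose entries have total degree at most `2e` is a
`K`-linear combination of rank-one matrices `u uᵀ` with entries of `u` of degree at most `e`: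
split every monomial as a product of two monomials of degree at most `e` and polarize
`u vᵀ + v uᵀ = ((u + v)(u + v)ᵀ - (u - v)(u - v)ᵀ) / 2`. Hence `M = B D Bᵀ` with `D` diagonal,
constant and invertible, and by the Schur complement the symmetric matrix `[[0, B], [Bᵀ, -D⁻¹]]`,
whose entries have degree at most `e`, has determinant `det (-D⁻¹) * det M`, a nonzero constant
multiple of `det M`. Starting from the `1 × 1` matrix `(p)` and halving the degree until it is `1`
gives a symmetric matrix with affine entries and determinant `p`; an identity block pads it to any
size.
-/

open MvPolynomial Matrix

namespace MvPolynomial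

variable {σ R : Type*} [CommSemiring R]

lemma restrictTotalDegree_add_le (a b : ℕ) :
    restrictTotalDegree σ R (a + b) ≤ restrictTotalDegree σ R a * restrictTotalDegree σ R b := by
  rw [restrictTotalDegree, restrictTotalDegree, restrictTotalDegree, ← restrictSupport_add]
  refine restrictSupport_mono R fun s (hs : s.degree ≤ a + b) => ?_
  obtain ⟨t, hts, ht⟩ := Finsupp.exists_le_degree_eq s (min a s.degree) (min_le_right _ _)
  obtain ⟨u, rfl⟩ := le_iff_exists_add.mp hts
  rw [map_add] at hs ht
  exact Set.add_mem_add (show t.degree ≤ a by omega) (show u.degree ≤ b by omega)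

lemma eq_C_add_sum_X_mul_C_of_totalDegree_le_one [Fintype σ] {q : MvPolynomial σ R}
    (hq : q.totalDegree ≤ 1) :
    q = C (coeff 0 q) + ∑ i, X i * C (coeff (Finsupp.single i 1) q) := by
  classical
  ext s
  simp only [coeff_add, coeff_C, coeff_sum, mul_comm (X _), C_mul_X_eq_monomial, coeff_monomial]
  obtain h | h | h : s.degree = 0 ∨ s.degree = 1 ∨ 1 < s.degree := by omega
  · simp [(Finsupp.degree_eq_zero_iff s).mp h]
  · obtain ⟨i, rfl⟩ := (Finsupp.sum_eq_one_iff s).mp h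
    simp [Finsupp.single_left_inj, (Finsupp.single_ne_zero.mpr one_ne_zero).symm]
  · have hs : s ∉ q.support := fun hs => h.not_ge ((le_totalDegree hs).trans hq)
    have h0 : (0 : σ →₀ ℕ) ≠ s := by rintro rfl; simp at h
    have h1 (i : σ) : Finsupp.single i 1 ≠ s := by rintro rfl; simp at h
    simp [notMem_support_iff.mp hs, h0, h1]

lemma totalDegree_pi_single_le {ι : Type*} [DecidableEq ι] {e : ℕ} (i : ι)
    {a : MvPolynomial σ R} (ha : a.totalDegree ≤ e) (k : ι) :
    ((Pi.single i a : ι → MvPolynomial σ R) k).totalDegree ≤ e := by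
  rcases eq_or_ne k i with rfl | hk
  · simpa using ha
  · simp [hk]

lemma totalDegree_diagonal_C {ι : Type*} [DecidableEq ι] (c : ι → R) (i j : ι) :
    ((diagonal fun k => C (c k) : Matrix ι ι (MvPolynomial σ R)) i j).totalDegree = 0 := by
  rcases eq_or_ne i j with rfl | h
  · simp
  · simp [h]

lemma totalDegree_fromBlocks_le {m n o p : Type*} {e : ℕ}
    {A : Matrix m o (MvPolynomial σ R)} {B : Matrix m p (MvPolynomial σ R)}
    {B' : Matrix n o (MvPolynomial σ R)} {D : Matrix n p (MvPolynomial σ R)}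
    (hA : ∀ i j, (A i j).totalDegree ≤ e) (hB : ∀ i j, (B i j).totalDegree ≤ e)
    (hB' : ∀ i j, (B' i j).totalDegree ≤ e) (hD : ∀ i j, (D i j).totalDegree ≤ e) :
    ∀ i j, (fromBlocks A B B' D i j).totalDegree ≤ e := by
  rintro (i | i) (j | j)
  exacts [hA i j, hB i j, hB' i j, hD i j]

end MvPolynomial

lemma Matrix.det_fromBlocks_zero₁₁_neg {m n R : Type*} [Fintype m] [DecidableEq m] [Fintype n]
    [DecidableEq n] [CommRing R] (B : Matrix m n R) (B' : Matrix n m R) {D E : Matrix n n R}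
    (hDE : D * E = 1) : (fromBlocks 0 B B' (-E)).det = (-E).det * (B * D * B').det := by
  let : Invertible (-E) :=
    ⟨-D, by rw [neg_mul_neg, hDE], by rw [neg_mul_neg, mul_eq_one_comm.mp hDE]⟩
  rw [det_fromBlocks₂₂]
  congr 2
  change 0 - B * -D * B' = _
  simp

variable {σ K ι : Type*} [Field K]

variable (σ K ι) in
def gramSubmodule (e : ℕ) : Submodule K (Matrix ι ι (MvPolynomial σ K)) where
  carrier := {M | ∃ (J : Type) (_ : Fintype J) (_ : DecidableEq J)
    (B : Matrix ι J (MvPolynomial σ K)) (w : J → K),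
    (∀ j, w j ≠ 0) ∧ (∀ i j, (B i j).totalDegree ≤ e) ∧
      B * diagonal (C ∘ w : J → MvPolynomial σ K) * Bᵀ = M}
  zero_mem' := ⟨Empty, inferInstance, inferInstance, 0, 0, nofun, by simp, by simp⟩
  add_mem' := by
    rintro _ _ ⟨J₁, _, _, B₁, w₁, hw₁, hB₁, rfl⟩ ⟨J₂, _, _, B₂, w₂, hw₂, hB₂, rfl⟩
    refine ⟨J₁ ⊕ J₂, inferInstance, inferInstance, fromCols B₁ B₂, Sum.elim w₁ w₂,
      fun j => by cases j <;> simp [*], fun i j => by cases j <;> simp [*], ?_⟩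
    rw [Sum.comp_elim, ← fromBlocks_diagonal, fromCols_mul_fromBlocks, transpose_fromCols,
      fromCols_mul_fromRows]
    simp
  smul_mem' := by
    rintro c _ ⟨J, _, _, B, w, hw, hB, rfl⟩
    rcases eq_or_ne c 0 with rfl | hc
    · exact ⟨Empty, inferInstance, inferInstance, 0, 0, nofun, by simp, by simp⟩
    refine ⟨J, inferInstance, inferInstance, B, c • w, fun j => smul_ne_zero hc (hw j), hB, ?_⟩
    rw [← Matrix.smul_mul, ← Matrix.mul_smul]
    congr 2
    ext j k
    simp [diagonal_apply, smul_eq_C_mul]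

lemma vecMulVec_self_mem_gramSubmodule {e : ℕ} {u : ι → MvPolynomial σ K}
    (hu : ∀ i, (u i).totalDegree ≤ e) : vecMulVec u u ∈ gramSubmodule σ K ι e :=
  ⟨Unit, inferInstance, inferInstance, replicateCol Unit u, 1, fun _ => one_ne_zero,
    fun i _ => hu i, by simp [vecMulVec_eq Unit]⟩

lemma vecMulVec_add_vecMulVec_mem_gramSubmodule [NeZero (2 : K)] {e : ℕ}
    {u v : ι → MvPolynomial σ K} (hu : ∀ i, (u i).totalDegree ≤ e)
    (hv : ∀ i, (v i).totalDegree ≤ e) :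
    vecMulVec u v + vecMulVec v u ∈ gramSubmodule σ K ι e := by
  have polarization : vecMulVec (u + v) (u + v) - vecMulVec (u - v) (u - v) =
      (2 : K) • (vecMulVec u v + vecMulVec v u) := by
    ext i j : 1
    simp only [Matrix.sub_apply, Matrix.add_apply, Matrix.smul_apply, vecMulVec_apply,
      Pi.add_apply, Pi.sub_apply, smul_eq_C_mul, map_ofNat]
    ring
  rw [← inv_smul_smul₀ (two_ne_zero (α := K)) (vecMulVec u v + _), ← polarization]
  refine Submodule.smul_mem _ _ (Submodule.sub_mem _ ?_ ?_) <;>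
    refine vecMulVec_self_mem_gramSubmodule fun i => ?_
  · exact (totalDegree_add _ _).trans (max_le (hu i) (hv i))
  · exact (totalDegree_sub _ _).trans (max_le (hu i) (hv i))

lemma single_add_single_mem_gramSubmodule [NeZero (2 : K)] [DecidableEq ι] {e : ℕ} (i j : ι)
    {a b : MvPolynomial σ K} (ha : a.totalDegree ≤ e) (hb : b.totalDegree ≤ e) :
    Matrix.single i j (a * b) + Matrix.single j i (a * b) ∈ gramSubmodule σ K ι e := by
  have hsingle (i j : ι) (a b : MvPolynomial σ K) :
      Matrix.single i j (a * b) = vecMulVec (Pi.single i a) (Pi.single j b) := by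
    ext k l : 1
    simp only [single_apply, vecMulVec_apply, Pi.single_apply]
    split_ifs <;> simp_all
  rw [hsingle, mul_comm, hsingle]
  exact vecMulVec_add_vecMulVec_mem_gramSubmodule (totalDegree_pi_single_le i ha)
    (totalDegree_pi_single_le j hb)

lemma mem_gramSubmodule_of_isSymm [NeZero (2 : K)] [Fintype ι] [DecidableEq ι] {e : ℕ}
    {M : Matrix ι ι (MvPolynomial σ K)} (hM : M.IsSymm)
    (hdeg : ∀ i j, (M i j).totalDegree ≤ e + e) : M ∈ gramSubmodule σ K ι e := by
  have hpair (i j : ι) : restrictTotalDegree σ K (e + e) ≤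
      (gramSubmodule σ K ι e).comap (singleLinearMap K i j + singleLinearMap K j i) :=
    (restrictTotalDegree_add_le e e).trans <| Submodule.mul_le.mpr fun a ha b hb =>
      single_add_single_mem_gramSubmodule i j ((mem_restrictTotalDegree ..).mp ha)
        ((mem_restrictTotalDegree ..).mp hb)
  have hT : ∑ i, ∑ j, Matrix.single j i (M i j) = M := by
    rw [Finset.sum_comm]
    simp_rw [hM.apply]
    exact (matrix_eq_sum_single M).symm
  have hsum : M + M = ∑ i, ∑ j, (Matrix.single i j (M i j) + Matrix.single j i (M i j)) := by
    simp only [Finset.sum_add_distrib, hT, ← matrix_eq_sum_single]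
  rw [← inv_smul_smul₀ (two_ne_zero (α := K)) M, two_smul, hsum]
  exact Submodule.smul_mem _ _ <| Submodule.sum_mem _ fun i _ => Submodule.sum_mem _ fun j _ =>
    hpair i j ((mem_restrictTotalDegree ..).mpr (hdeg i j))

variable (K) in
def HasSymmDetRep (e : ℕ) (p : MvPolynomial σ K) : Prop :=
  ∃ (ι : Type) (_ : Fintype ι) (_ : DecidableEq ι) (M : Matrix ι ι (MvPolynomial σ K)),
    M.IsSymm ∧ (∀ i j, (M i j).totalDegree ≤ e) ∧ M.det = p

namespace HasSymmDetRep

variable {e : ℕ} {p q : MvPolynomial σ K}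

lemma mono {e' : ℕ} (he : e ≤ e') : HasSymmDetRep K e p → HasSymmDetRep K e' p :=
  fun ⟨ι, hι, hι', M, hM, hdeg, hdet⟩ => ⟨ι, hι, hι', M, hM, fun i j => (hdeg i j).trans he, hdet⟩

lemma of_totalDegree_le (h : p.totalDegree ≤ e) : HasSymmDetRep K e p :=
  ⟨Unit, inferInstance, inferInstance, of fun _ _ => p, rfl, fun _ _ => h, det_unique _⟩

lemma mul : HasSymmDetRep K e p → HasSymmDetRep K e q → HasSymmDetRep K e (p * q) := by
  rintro ⟨ι, _, _, M, hM, hMdeg, rfl⟩ ⟨κ, _, _, N, hN, hNdeg, rfl⟩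
  exact ⟨ι ⊕ κ, inferInstance, inferInstance, fromBlocks M 0 0 N, hM.fromBlocks (by simp) hN,
    totalDegree_fromBlocks_le hMdeg (by simp) (by simp) hNdeg, det_fromBlocks_zero₁₂ _ _ _⟩

lemma of_C_mul {c : K} (hc : c ≠ 0) (h : HasSymmDetRep K e (C c * p)) : HasSymmDetRep K e p := by
  simpa [← mul_assoc, ← C_mul, inv_mul_cancel₀ hc] using
    (of_totalDegree_le (p := C c⁻¹) (by simp)).mul h

lemma of_add_self [NeZero (2 : K)] (h : HasSymmDetRep K (e + e) p) : HasSymmDetRep K e p := by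
  obtain ⟨ι, _, _, M, hM, hdeg, rfl⟩ := h
  obtain ⟨J, _, _, B, w, hw, hB, rfl⟩ := mem_gramSubmodule_of_isSymm hM hdeg
  set E : Matrix J J (MvPolynomial σ K) := diagonal fun j => C (w j)⁻¹
  have hDE : diagonal (C ∘ w) * E = 1 := by
    simp [E, diagonal_mul_diagonal, ← C_mul, hw]
  refine of_C_mul (c := ∏ j, -(w j)⁻¹)
    (Finset.prod_ne_zero_iff.mpr fun j _ => by simpa using hw j)
    ⟨ι ⊕ J, inferInstance, inferInstance, fromBlocks 0 B Bᵀ (-E), ?_, ?_, ?_⟩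
  · exact isSymm_zero.fromBlocks rfl (isSymm_diagonal _).neg
  · refine totalDegree_fromBlocks_le (by simp) hB (fun i j => hB j i) fun i j => ?_
    simp [E, totalDegree_diagonal_C]
  · rw [det_fromBlocks_zero₁₁_neg B Bᵀ hDE]
    simp [E, det_diagonal]

lemma exists_fin (h : HasSymmDetRep K e p) (m : ℕ) :
    ∃ n, m ≤ n ∧ ∃ M : Matrix (Fin n) (Fin n) (MvPolynomial σ K),
      M.IsSymm ∧ (∀ i j, (M i j).totalDegree ≤ e) ∧ M.det = p := by
  obtain ⟨ι, _, _, M, hM, hdeg, rfl⟩ := h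
  let P := fromBlocks M 0 0 (diagonal fun _ : Fin m => C 1)
  let f := Fintype.equivFin (ι ⊕ Fin m)
  refine ⟨Fintype.card (ι ⊕ Fin m), by simp, P.submatrix f.symm f.symm, ?_, fun i j => ?_, ?_⟩
  · exact (hM.fromBlocks (by simp) (isSymm_diagonal _)).submatrix _
  · exact totalDegree_fromBlocks_le hdeg (by simp) (by simp)
      (fun i j => (totalDegree_diagonal_C _ i j).trans_le (Nat.zero_le e)) _ _
  · simp [P]

end HasSymmDetRep

theorem hasSymmDetRep_one [NeZero (2 : K)] (p : MvPolynomial σ K) : HasSymmDetRep K 1 p := by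
  suffices ∀ e, HasSymmDetRep K (e + 1) p → HasSymmDetRep K 1 p from
    this _ (.of_totalDegree_le (Nat.le_succ p.totalDegree))
  intro e
  induction e with
  | zero => exact id
  | succ e ih => exact fun h => ih (h.mono (by omega)).of_add_self

open MvPolynomial in
theorem stmt9_general {d m : ℕ} (p : MvPolynomial (Fin d) ℝ) :
    ∃ n : ℕ, m ≤ n ∧
      ∃ (A0 : Matrix (Fin n) (Fin n) ℝ) (A : Fin d → Matrix (Fin n) (Fin n) ℝ),
        A0.IsSymm ∧ (∀ i, (A i).IsSymm) ∧
        Matrix.det (Matrix.of fun k l =>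
          C (A0 k l) + ∑ i, X i * C (A i k l)) = p := by
  obtain ⟨n, hmn, M, hM, hdeg, rfl⟩ := (hasSymmDetRep_one p).exists_fin m
  refine ⟨n, hmn, M.map (coeff 0), fun i => M.map (coeff (Finsupp.single i 1)),
    hM.map _, fun i => hM.map _, ?_⟩
  congr 1
  ext k l : 1
  exact (eq_C_add_sum_X_mul_C_of_totalDegree_le_one (hdeg k l)).symm

open MvPolynomial in
/-- Every polynomial `p ∈ ℝ[x_1,…,x_d]` of degree `m` admits a real symmetric
determinantal representation `det(A_0 + x_1 A_1 + ⋯ + x_d A_d) = p(x)` of some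
size `n ≥ m`. -/
theorem stmt9 {d m : ℕ} (p : MvPolynomial (Fin d) ℝ) (hdeg : p.totalDegree = m) :
    ∃ n : ℕ, m ≤ n ∧
      ∃ (A0 : Matrix (Fin n) (Fin n) ℝ) (A : Fin d → Matrix (Fin n) (Fin n) ℝ),
        A0.IsSymm ∧ (∀ i, (A i).IsSymm) ∧
        Matrix.det (Matrix.of fun k l =>
          C (A0 k l) + ∑ i, X i * C (A i k l)) = p :=
  stmt9_general p
end

section
/- Let d ≥ 5 and let p = (x_1+1)² − x_2² − ⋯ − x_d² ∈ ℝ[x_1,…,x_d]. Then there exist no integer n and no complex Hermitian n×n matrices A_0, A_1, …, A_d with A_0 = I_n such that det(A_0 + x_1 A_1 + ⋯ + x_d A_d) = p(x) as polynomials in x_1,…,x_d. -/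
/-!
Write `M(x) = Σ xᵢ Aᵢ` for real `x`, so that
`det (1 + z M(x)) = (1 + z x₁)² - z² (x₂² + ⋯ + x_d²)`. The nonzero eigenvalues `λ` of
the Hermitian matrix `M(x)` are those with `-1/λ` a root of this polynomial in `z`; when
its only root is `-1/c`, this forces `M(x)² = c M(x)`. Hence `A₁` is an orthogonal
projection, of rank `2` since `det (1 + A₁) = 4`, and `M(x)² = 2 x₁ M(x)` on the light
cone `x₁² = x₂² + ⋯ + x_d²`. Evaluating at the light-cone points `e₁ ± eᵢ` and
`5e₁ + 3eᵢ + 4eⱼ` shows that `A₂, …, A_d` restrict to pairwise anticommuting involutions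
of the two-dimensional range of `A₁`. Together with the identity these are `d` operators,
pairwise orthogonal for the trace form on the four-dimensional algebra of endomorphisms
of that range, so `d ≤ 4`.
-/

open Finset Module LinearMap

namespace Matrix.IsHermitian

variable {𝕜 n : Type*} [RCLike 𝕜] [Fintype n] [DecidableEq n] {M : Matrix n n 𝕜}

theorem det_one_add_smul (hM : M.IsHermitian) (z : 𝕜) :
    (1 + z • M).det = ∏ i, (1 + z * hM.eigenvalues i) := by
  conv_lhs => rw [hM.spectral_theorem,
    ← map_one (Unitary.conjStarAlgAut 𝕜 _ hM.eigenvectorUnitary),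
    ← map_smul, ← map_add, Unitary.conjStarAlgAut_apply]
  rw [det_conj_of_mul_eq_one (Unitary.coe_mul_star_self _) (Unitary.coe_star_mul_self _),
    ← diagonal_one, ← diagonal_smul, diagonal_add, det_diagonal]
  simp

theorem mul_self_eq_smul_iff (hM : M.IsHermitian) (c : ℝ) :
    M * M = c • M ↔ ∀ i, hM.eigenvalues i * hM.eigenvalues i = c * hM.eigenvalues i := by
  have hsq : M * M = cfc (fun x : ℝ => x * x) M := by
    rw [cfc_mul (fun x : ℝ => x) (fun x : ℝ => x) M, cfc_id' ℝ M]
  have hlin : c • M = cfc (fun x : ℝ => c * x) M := by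
    rw [cfc_const_mul c (fun x : ℝ => x) M, cfc_id' ℝ M]
  rw [hsq, hlin, cfc_eq_cfc_iff_eqOn, hM.spectrum_real_eq_range_eigenvalues, Set.eqOn_range]
  exact funext_iff

theorem mul_self_eq_smul_of_det_eq_zero (hM : M.IsHermitian) (c : ℝ)
    (h : ∀ z : 𝕜, (1 + z • M).det = 0 → z * c = -1) : M * M = c • M := by
  refine (hM.mul_self_eq_smul_iff c).2 fun i => ?_
  by_cases h0 : hM.eigenvalues i = 0
  · simp [h0]
  have h0' : (hM.eigenvalues i : 𝕜) ≠ 0 := by exact_mod_cast h0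
  have hroot : (1 + (-(hM.eigenvalues i : 𝕜)⁻¹) • M).det = 0 := by
    rw [hM.det_one_add_smul]
    exact prod_eq_zero (mem_univ i) (by field_simp; ring)
  have hc := h _ hroot
  field_simp at hc
  rw [(by exact_mod_cast neg_injective hc : c = hM.eigenvalues i)]

theorem det_one_add_eq_two_pow_rank (hM : M.IsHermitian) (hMM : M * M = M) :
    (1 + M).det = 2 ^ M.rank := by
  have h01 := (hM.mul_self_eq_smul_iff 1).1 (by rwa [one_smul])
  rw [← one_smul 𝕜 M, hM.det_one_add_smul, one_smul, hM.rank_eq_card_non_zero_eigs,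
    Fintype.card_subtype, ← prod_const, prod_filter]
  refine prod_congr rfl fun i _ => ?_
  split_ifs with h
  · rw [mul_right_cancel₀ h (h01 i)]
    norm_num
  · simp_all

end Matrix.IsHermitian

section TorsionFreeRing

variable {R : Type*} [Ring R] [IsAddTorsionFree R]

theorem eq_of_two_mul_eq_two_mul {x y : R} (h : 2 * x = 2 * y) : x = y := by
  refine IsAddTorsionFree.nsmul_right_injective two_ne_zero ?_
  simpa only [two_nsmul, ← two_mul] using h

theorem mul_eq_and_mul_self_eq_of_mul_self_eq_two_mul {P A : R} (hP : P * P = P)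
    (hplus : (P + A) * (P + A) = 2 * (P + A)) (hminus : (P - A) * (P - A) = 2 * (P - A)) :
    P * A = A ∧ A * P = A ∧ A * A = P := by
  have hsq : 2 * (A * A) = 2 * P := by
    linear_combination (norm := noncomm_ring) hplus + hminus - 2 * hP
  have hsum : P * A + A * P = 2 * A := eq_of_two_mul_eq_two_mul <| by
    linear_combination (norm := noncomm_ring) hplus - hminus
  have hleft : P * A * P = P * A := by
    linear_combination (norm := noncomm_ring) P * hsum - hP * A
  have hright : P * A * P = A * P := by
    linear_combination (norm := noncomm_ring) hsum * P - A * hP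
  have hPA : P * A = A := eq_of_two_mul_eq_two_mul <| by
    linear_combination (norm := noncomm_ring) hsum - hleft + hright
  exact ⟨hPA, hright.symm.trans (hleft.trans hPA), eq_of_two_mul_eq_two_mul hsq⟩

theorem mul_eq_neg_mul_of_mul_self_eq_two_mul {P A B : R} (hP : P * P = P)
    (hPA : P * A = A) (hAP : A * P = A) (hA : A * A = P)
    (hPB : P * B = B) (hBP : B * P = B) (hB : B * B = P)
    (h : (5 * P + 3 * A + 4 * B) * (5 * P + 3 * A + 4 * B) = 10 * (5 * P + 3 * A + 4 * B)) :
    A * B = -(B * A) := by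
  refine IsAddTorsionFree.nsmul_right_injective (n := 12) (by norm_num) ?_
  simp only [nsmul_eq_mul, Nat.cast_ofNat]
  linear_combination (norm := noncomm_ring)
    h - 25 * hP - 15 * hPA - 15 * hAP - 9 * hA - 20 * hPB - 20 * hBP - 16 * hB

end TorsionFreeRing

namespace Module.End

variable {K ι : Type*} [Field K] [CharZero K] [Fintype ι] [Nontrivial ι]

theorem card_add_one_le_finrank_sq {V : Type*} [AddCommGroup V] [Module K V]
    [FiniteDimensional K V] (hV : finrank K V ≠ 0) (J : ι → End K V)
    (hJ : ∀ i, J i * J i = 1) (hanti : ∀ i j, i ≠ j → J i * J j = -(J j * J i)) :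
    Fintype.card ι + 1 ≤ finrank K V ^ 2 := by
  have htrace : ∀ i, trace K V (J i) = 0 := by
    intro i
    obtain ⟨j, hji⟩ := exists_ne i
    have hconj : J i = -(J j * (J i * J j)) := by
      rw [← mul_assoc, ← neg_mul, ← hanti i j hji.symm, mul_assoc, hJ, mul_one]
    have := congrArg (trace K V) hconj
    rw [map_neg, trace_mul_comm, mul_assoc, hJ, mul_one] at this
    exact self_eq_neg.mp this
  have horth : ∀ i j, i ≠ j → trace K V (J i * J j) = 0 := by
    intro i j hij
    have := congrArg (trace K V) (hanti i j hij)
    rw [map_neg, trace_mul_comm K (J j)] at this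
    exact self_eq_neg.mp this
  let B : LinearMap.BilinForm K (End K V) := (LinearMap.mul K (End K V)).compr₂ (trace K V)
  have hB : ∀ x y, B x y = trace K V (x * y) := fun _ _ => rfl
  let f : Option ι → End K V := fun o => o.elim 1 J
  have hli : LinearIndependent K f := by
    refine LinearMap.BilinForm.linearIndependent_of_iIsOrtho (B := B) ?_ ?_
    · rintro (_ | i) (_ | j) hij
      · exact absurd rfl hij
      · exact (congrArg (trace K V) (one_mul (J j))).trans (htrace j)
      · exact (congrArg (trace K V) (mul_one (J i))).trans (htrace i)
      · exact horth i j fun h => hij (congrArg some h)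
    · rintro (_ | i) <;> simp [f, hB, hJ, hV]
  have := hli.fintype_card_le_finrank
  rwa [Fintype.card_option, finrank_linearMap, ← sq] at this

theorem card_add_one_le_finrank_range_sq {W : Type*} [AddCommGroup W] [Module K W]
    [FiniteDimensional K W] {p : End K W} (hp : IsIdempotentElem p)
    (hp0 : finrank K (range p) ≠ 0) (g : ι → End K W) (hpg : ∀ i, p * g i = g i)
    (hg : ∀ i, g i * g i = p) (hanti : ∀ i j, i ≠ j → g i * g j = -(g j * g i)) :
    Fintype.card ι + 1 ≤ finrank K (range p) ^ 2 := by
  have hmaps : ∀ i, ∀ x ∈ range p, g i x ∈ range p := fun i x _ =>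
    hpg i ▸ mem_range_self p (g i x)
  refine card_add_one_le_finrank_sq hp0 (fun i => (g i).restrict (hmaps i)) ?_ ?_
  · intro i
    ext ⟨_, y, rfl⟩
    simp only [mul_apply, restrict_apply, one_apply]
    rw [← mul_apply, hg, ← mul_apply, hp.eq]
  · intro i j hij
    ext x
    simp only [mul_apply, restrict_apply, LinearMap.neg_apply]
    rw [← mul_apply, hanti i j hij, LinearMap.neg_apply, mul_apply]
    rfl

end Module.End

instance Matrix.instIsAddTorsionFree {m n R : Type*} [AddMonoid R] [IsAddTorsionFree R] :
    IsAddTorsionFree (Matrix m n R) :=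
  inferInstanceAs (IsAddTorsionFree (m → n → R))

def IsLorentzPencil {n ι : Type*} [Fintype n] [DecidableEq n] (P : Matrix n n ℂ)
    (G : ι → Matrix n n ℂ) : Prop :=
  ∀ k l, k ≠ l → ∀ a b c : ℂ,
    (1 + (a • P + b • G k + c • G l)).det = (a + 1) ^ 2 - b ^ 2 - c ^ 2

namespace IsLorentzPencil

variable {n ι : Type*} [Fintype n] [DecidableEq n] {P : Matrix n n ℂ} {G : ι → Matrix n n ℂ}

theorem mul_self_eq_two_mul_of_sq_eq_add_sq (h : IsLorentzPencil P G) (hP : P.IsHermitian)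
    (hG : ∀ k, (G k).IsHermitian) {k l : ι} (hkl : k ≠ l) {s t u : ℤ}
    (hstu : s ^ 2 = t ^ 2 + u ^ 2) :
    (s • P + t • G k + u • G l) * (s • P + t • G k + u • G l) =
      (2 * s) • (s • P + t • G k + u • G l) := by
  have hcast : ∀ (r : ℤ) (X : Matrix n n ℂ), r • X = (r : ℂ) • X :=
    fun r X => (Int.cast_smul_eq_zsmul ℂ r X).symm
  have hself : ∀ r : ℤ, IsSelfAdjoint (r : ℂ) :=
    fun r => (Complex.im_eq_zero_iff_isSelfAdjoint _).mp (Complex.intCast_im r)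
  have hM : (s • P + t • G k + u • G l).IsHermitian := by
    simp only [hcast]
    exact ((hP.smul (hself s)).add ((hG k).smul (hself t))).add ((hG l).smul (hself u))
  refine (hM.mul_self_eq_smul_of_det_eq_zero (2 * s : ℤ) fun z hz => ?_).trans
    (Int.cast_smul_eq_zsmul ℝ _ _)
  rw [hcast, hcast, hcast, smul_add, smul_add, smul_smul, smul_smul, smul_smul,
    h k l hkl] at hz
  have hstu' : (s : ℂ) ^ 2 = t ^ 2 + u ^ 2 := by exact_mod_cast hstu
  push_cast
  linear_combination hz - z ^ 2 * hstu'

section Nontrivial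

variable [Nontrivial ι]

theorem mul_self_eq_self (h : IsLorentzPencil P G) (hP : P.IsHermitian) : P * P = P := by
  obtain ⟨k, l, hkl⟩ := exists_pair_ne ι
  simpa using hP.mul_self_eq_smul_of_det_eq_zero 1 fun z hz => by
    rw [show (1 + z • P).det = (z + 1) ^ 2 by simpa using h k l hkl z 0 0] at hz
    push_cast
    linear_combination pow_eq_zero_iff two_ne_zero |>.mp hz

theorem rank_eq_two (h : IsLorentzPencil P G) (hP : P.IsHermitian) : P.rank = 2 := by
  obtain ⟨k, l, hkl⟩ := exists_pair_ne ι
  have h4 : (2 : ℂ) ^ P.rank = 2 ^ 2 := by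
    rw [← hP.det_one_add_eq_two_pow_rank (h.mul_self_eq_self hP), ← one_smul ℂ P]
    simpa [one_add_one_eq_two] using h k l hkl 1 0 0
  exact Nat.pow_right_injective le_rfl (by exact_mod_cast h4)

theorem mul_eq_and_mul_self_eq (h : IsLorentzPencil P G) (hP : P.IsHermitian)
    (hG : ∀ k, (G k).IsHermitian) (k : ι) :
    P * G k = G k ∧ G k * P = G k ∧ G k * G k = P := by
  obtain ⟨l, hlk⟩ := exists_ne k
  have hcone := fun t : ℤ => h.mul_self_eq_two_mul_of_sq_eq_add_sq hP hG hlk.symm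
    (s := 1) (t := t) (u := 0)
  refine mul_eq_and_mul_self_eq_of_mul_self_eq_two_mul (h.mul_self_eq_self hP) ?_ ?_
  · simpa only [zsmul_eq_mul, Int.cast_one, Int.cast_zero, Int.cast_ofNat, one_mul, zero_mul,
      add_zero, mul_one] using hcone 1 (by norm_num)
  · simpa only [zsmul_eq_mul, Int.cast_one, Int.cast_zero, Int.cast_neg, Int.cast_ofNat,
      one_mul, zero_mul, neg_one_mul, add_zero, mul_one, ← sub_eq_add_neg]
      using hcone (-1) (by norm_num)

theorem mul_eq_neg_mul (h : IsLorentzPencil P G) (hP : P.IsHermitian)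
    (hG : ∀ k, (G k).IsHermitian) {k l : ι} (hkl : k ≠ l) : G k * G l = -(G l * G k) :=
  have ⟨hPk, hkP, hk⟩ := h.mul_eq_and_mul_self_eq hP hG k
  have ⟨hPl, hlP, hl⟩ := h.mul_eq_and_mul_self_eq hP hG l
  mul_eq_neg_mul_of_mul_self_eq_two_mul (h.mul_self_eq_self hP) hPk hkP hk hPl hlP hl <| by
    simpa only [Int.reduceMul, zsmul_eq_mul, Int.cast_ofNat] using
      h.mul_self_eq_two_mul_of_sq_eq_add_sq hP hG hkl (s := 5) (t := 3) (u := 4) (by norm_num)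

end Nontrivial

theorem card_le_three [Fintype ι] (h : IsLorentzPencil P G) (hP : P.IsHermitian)
    (hG : ∀ k, (G k).IsHermitian) : Fintype.card ι ≤ 3 := by
  by_contra! hcard
  have : Nontrivial ι := Fintype.one_lt_card_iff_nontrivial.mp (by omega)
  have hrank : finrank ℂ (range (Matrix.toLinAlgEquiv' P)) = 2 := h.rank_eq_two hP
  have := Module.End.card_add_one_le_finrank_range_sq (K := ℂ) (p := Matrix.toLinAlgEquiv' P)
    (by rw [IsIdempotentElem, ← map_mul, h.mul_self_eq_self hP]) (by rw [hrank]; norm_num)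
    (fun k => Matrix.toLinAlgEquiv' (G k))
    (fun k => by rw [← map_mul, (h.mul_eq_and_mul_self_eq hP hG k).1])
    (fun k => by rw [← map_mul, (h.mul_eq_and_mul_self_eq hP hG k).2.2])
    (fun k l hkl => by rw [← map_mul, ← map_mul, h.mul_eq_neg_mul hP hG hkl, map_neg])
  rw [hrank] at this
  omega

end IsLorentzPencil

theorem MvPolynomial.eval_det_C_add_sum_X_mul_C {R n σ : Type*} [CommRing R] [Fintype n]
    [DecidableEq n] [Fintype σ] (A0 : Matrix n n R) (A : σ → Matrix n n R) (x : σ → R) :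
    eval x (Matrix.of fun k l => C (A0 k l) + ∑ i, X i * C (A i k l)).det =
      (A0 + ∑ i, x i • A i).det := by
  rw [RingHom.map_det]
  congr 1
  ext k l
  simp [Matrix.sum_apply, mul_comm]

theorem isLorentzPencil_of_det_one_add_sum_smul_eq {n d : ℕ}
    {A : Fin d → Matrix (Fin n) (Fin n) ℂ} {i₀ : Fin d}
    (hA : ∀ x : Fin d → ℂ,
      (1 + ∑ i, x i • A i).det = (x i₀ + 1) ^ 2 - ∑ i ∈ univ \ {i₀}, x i ^ 2) :
    IsLorentzPencil (A i₀) fun k : {i // i ≠ i₀} => A k := by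
  rintro ⟨k, hk⟩ ⟨l, hl⟩ hkl a b c
  replace hkl : k ≠ l := fun h => hkl (Subtype.ext h)
  let x : Fin d → ℂ := Pi.single i₀ a + Pi.single k b + Pi.single l c
  have hsq : ∀ i ∈ univ \ {i₀}, x i ^ 2 =
      (Pi.single k (b ^ 2) + Pi.single l (c ^ 2) : Fin d → ℂ) i := by
    intro i hi
    have hi : i ≠ i₀ := by simpa using hi
    by_cases hik : i = k
    · subst hik; simp [x, hi, hkl]
    · by_cases hil : i = l
      · subst hil; simp [x, hi, hik]
      · simp [x, hi, hik, hil]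
  have := hA x
  rw [sum_congr rfl hsq] at this
  simpa [x, sum_add_distrib, add_smul, Pi.single_apply, hk, hl, sub_sub] using this

open MvPolynomial in
/-- For `d ≥ 5`, the RZ polynomial `p = (x_1+1)² − x_2² − ⋯ − x_d²` admits no
self-adjoint determinantal representation `det(A_0 + x_1 A_1 + ⋯ + x_d A_d) = p(x)`
with complex Hermitian matrices of any size `n` and `A_0 = I`.
(The variable `x_1` is indexed by `⟨0, _⟩ : Fin d` and `x_{j+1}` by `⟨j, _⟩`.) -/
theorem stmt10 {d : ℕ} (hd : 5 ≤ d) (p : MvPolynomial (Fin d) ℝ)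
    (hp : p = (X (⟨0, by omega⟩ : Fin d) + 1) ^ 2 -
      ∑ i ∈ Finset.univ \ {(⟨0, by omega⟩ : Fin d)}, (X i) ^ 2) :
    ¬ ∃ (n : ℕ) (A0 : Matrix (Fin n) (Fin n) ℂ)
        (A : Fin d → Matrix (Fin n) (Fin n) ℂ),
      A0 = 1 ∧ A0.IsHermitian ∧ (∀ i, (A i).IsHermitian) ∧
      Matrix.det (Matrix.of fun k l =>
          C (A0 k l) + ∑ i, X i * C (A i k l)) =
        MvPolynomial.map (algebraMap ℝ ℂ) p := by
  rintro ⟨n, A0, A, rfl, -, hA, hdet⟩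
  set i₀ : Fin d := ⟨0, by omega⟩
  have hpencil : ∀ x : Fin d → ℂ,
      (1 + ∑ i, x i • A i).det = (x i₀ + 1) ^ 2 - ∑ i ∈ univ \ {i₀}, x i ^ 2 := by
    intro x
    rw [← eval_det_C_add_sum_X_mul_C, hdet, hp]
    simp
  have := (isLorentzPencil_of_det_one_add_sum_smul_eq hpencil).card_le_three (hA i₀)
    fun k => hA k
  rw [Fintype.card_subtype_compl, Fintype.card_fin, Fintype.card_unique] at this
  omega
end

section
/- Let p ∈ ℝ[x_1,…,x_d] be an RZ_{x⁰} polynomial of degree 2 with p(x⁰) = 1. Then there exist a positive integer r and real symmetric matrices A_0, A_1, …, A_d of size n = 2r with A_0 + x⁰_1 A_1 + ⋯ + x⁰_d A_d = I_n such that det(A_0 + x_1 A_1 + ⋯ + x_d A_d) = p(x)^r as polynomials in x_1,…,x_d. -/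
/-!
On a line through `x⁰`, `p (x⁰ + t y) = 1 + ℓ(y) t + q(y) t²` with `ℓ` linear and `q` quadratic.
Real-rootedness forces `4 q(y) ≤ ℓ(y)²`, so `ℓ² / 4 - q` is a positive semidefinite form, and
`p = u² - ∑ₖ vₖ²` with affine `u, v₁, …, v_d`, `u(x⁰) = 1`, `vₖ(x⁰) = 0`.
For pairwise anticommuting symmetric involutions `E₀, E₁, …, E_d` of size `2r` (Kronecker products
of Pauli matrices), `M = u I + ∑ₖ vₖ Eₖ` satisfies `M (u I - ∑ₖ vₖ Eₖ) = p I`, and conjugation by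
`E₀` exchanges the two factors. Hence `det M ^ 2 = p ^ (2r)`, and the value `1` at `x⁰` fixes the
sign: `det M = p ^ r`.
-/

open MvPolynomial Matrix
open scoped Kronecker

section Quadratic

variable {σ R : Type*} [Fintype σ] [CommRing R]

theorem exists_eval_monomial_eq_quadratic {s : σ →₀ ℕ} (hs : (s.sum fun _ e => e) ≤ 2) (r : R) :
    ∃ (c : R) (b : σ → R) (G : Matrix σ σ R),
      ∀ x, eval x (monomial s r) = c + b ⬝ᵥ x + x ⬝ᵥ G *ᵥ x := by
  classical
  have hprod : ∀ x : σ → R, eval x (monomial s r) = r * ((Finsupp.toMultiset s).map x).prod := by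
    intro x
    rw [eval_monomial, Finsupp.toMultiset_map, Finsupp.prod_toMultiset,
      Finsupp.prod_mapDomain_index]
    · simp
    · simp [pow_add]
  have hcard : (Finsupp.toMultiset s).card ≤ 2 := by
    rwa [Finsupp.card_toMultiset]
  interval_cases h : (Finsupp.toMultiset s).card
  · rw [Multiset.card_eq_zero] at h
    exact ⟨r, 0, 0, fun x => by simp [hprod, h]⟩
  · obtain ⟨i, hi⟩ := Multiset.card_eq_one.1 h
    exact ⟨0, Pi.single i r, 0, fun x => by simp [hprod, hi]⟩
  · obtain ⟨i, j, hij⟩ := Multiset.card_eq_two.1 h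
    refine ⟨0, 0, Matrix.single i j r, fun x => ?_⟩
    simp only [hprod, hij, Multiset.insert_eq_cons, Multiset.map_cons, Multiset.map_singleton,
      Multiset.prod_cons, Multiset.prod_singleton, zero_dotProduct, add_zero, single_mulVec_eq,
      dotProduct_smul, dotProduct_single, mul_one, smul_eq_mul, zero_add]
    ring

theorem exists_eval_eq_quadratic_of_totalDegree_le_two {p : MvPolynomial σ R}
    (hp : p.totalDegree ≤ 2) :
    ∃ (c : R) (b : σ → R) (G : Matrix σ σ R), ∀ x, eval x p = c + b ⬝ᵥ x + x ⬝ᵥ G *ᵥ x := by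
  rw [p.as_sum]
  refine Finset.sum_induction _ (fun q => ∃ (c : R) (b : σ → R) (G : Matrix σ σ R),
    ∀ x, eval x q = c + b ⬝ᵥ x + x ⬝ᵥ G *ᵥ x) ?_ ⟨0, 0, 0, fun x => by simp⟩
    fun s hs => exists_eval_monomial_eq_quadratic ((le_totalDegree hs).trans hp) _
  rintro q₁ q₂ ⟨c₁, b₁, G₁, h₁⟩ ⟨c₂, b₂, G₂, h₂⟩
  refine ⟨c₁ + c₂, b₁ + b₂, G₁ + G₂, fun x => ?_⟩
  rw [map_add, h₁, h₂, add_dotProduct, add_mulVec, dotProduct_add]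
  ring

theorem quadratic_add_smul (c : R) (b : σ → R) (G : Matrix σ σ R) (x₀ y : σ → R) (t : R) :
    c + b ⬝ᵥ (x₀ + t • y) + (x₀ + t • y) ⬝ᵥ G *ᵥ (x₀ + t • y)
      = (y ⬝ᵥ G *ᵥ y) * (t * t) + ((b + x₀ ᵥ* G + G *ᵥ x₀) ⬝ᵥ y) * t
        + (c + b ⬝ᵥ x₀ + x₀ ⬝ᵥ G *ᵥ x₀) := by
  simp only [dotProduct_add, add_dotProduct, mulVec_add, mulVec_smul, dotProduct_smul,
    smul_dotProduct, smul_eq_mul, ← dotProduct_mulVec, dotProduct_comm (G *ᵥ x₀) y]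
  ring

end Quadratic

theorem discrim_nonneg_of_forall_im_eq_zero {a b c : ℝ}
    (h : ∀ t : ℂ, a * (t * t) + b * t + c = 0 → t.im = 0) : 0 ≤ discrim a b c := by
  rcases eq_or_ne a 0 with rfl | ha
  · simpa [discrim] using sq_nonneg b
  obtain ⟨t, ht⟩ := exists_quadratic_eq_zero (b := (b : ℂ)) (c := c) (Complex.ofReal_ne_zero.2 ha)
    (IsAlgClosed.exists_eq_mul_self _)
  have ht_real : (t.re : ℂ) = t := Complex.ext rfl (by simp [h t ht])
  rw [← ht_real] at ht
  have hre : a * (t.re * t.re) + b * t.re + c = 0 := by exact_mod_cast ht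
  rw [discrim_eq_sq_of_quadratic_eq_zero hre]
  positivity

open scoped MatrixOrder in
theorem exists_dotProduct_mulVec_eq_dotProduct_self {n : Type*} [Fintype n]
    (S : Matrix n n ℝ) (hS : ∀ y, 0 ≤ y ⬝ᵥ S *ᵥ y) :
    ∃ B : Matrix n n ℝ, ∀ y, y ⬝ᵥ S *ᵥ y = B *ᵥ y ⬝ᵥ B *ᵥ y := by
  classical
  set S' := (2⁻¹ : ℝ) • (S + Sᵀ)
  have hS' : ∀ y, y ⬝ᵥ S' *ᵥ y = y ⬝ᵥ S *ᵥ y := fun y => by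
    simp only [S', smul_mulVec, add_mulVec, mulVec_transpose, dotProduct_smul, dotProduct_add,
      dotProduct_comm y (y ᵥ* S), ← dotProduct_mulVec, smul_eq_mul]
    ring
  have hpsd : S'.PosSemidef := posSemidef_iff_dotProduct_mulVec.2
    ⟨by simp [S', IsHermitian, add_comm], fun y => by simpa [hS'] using hS y⟩
  obtain ⟨B, hB⟩ := CStarAlgebra.nonneg_iff_eq_star_mul_self.mp hpsd.nonneg
  refine ⟨B, fun y => ?_⟩
  rw [← hS', hB, ← mulVec_mulVec, dotProduct_mulVec, star_eq_conjTranspose, vecMul_conjTranspose,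
    star_trivial, star_trivial]

namespace IsRZ

variable {d : ℕ} {p : MvPolynomial (Fin d) ℝ} {x₀ : Fin d → ℝ}

theorem discrim_nonneg (hRZ : IsRZ p x₀) {y : Fin d → ℝ} {a b c : ℝ}
    (hline : ∀ t : ℝ, eval (x₀ + t • y) p = a * (t * t) + b * t + c) : 0 ≤ discrim a b c := by
  -- `g = p (x₀ + t y)` as a polynomial in `t`: it is determined by its real values, hence it
  -- agrees with the given quadratic at complex `t` too.
  set g : Polynomial ℝ := aeval (fun i => Polynomial.C (x₀ i) + Polynomial.X * Polynomial.C (y i)) p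
  have hg_aeval : ∀ {S : Type} [CommRing S] [Algebra ℝ S] (t : S),
      Polynomial.aeval t g = aeval (fun i => algebraMap ℝ S (x₀ i) + t * algebraMap ℝ S (y i)) p :=
    fun t => by
      change ((Polynomial.aeval t).comp (aeval _)) p = _
      simp only [comp_aeval, map_add, map_mul, Polynomial.aeval_X, Polynomial.aeval_C]
  have hg : g = Polynomial.C a * (Polynomial.X * Polynomial.X) + Polynomial.C b * Polynomial.X
      + Polynomial.C c := Polynomial.funext fun t => by
    simp only [Polynomial.eval_add, Polynomial.eval_mul, Polynomial.eval_C, Polynomial.eval_X,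
      ← hline t, ← Polynomial.coe_aeval_eq_eval, hg_aeval]
    rfl
  refine discrim_nonneg_of_forall_im_eq_zero fun t ht => hRZ y t ?_
  simpa [hg, ht] using (hg_aeval t).symm

theorem exists_eval_eq_sq_sub_sum_sq (hRZ : IsRZ p x₀) (hdeg : p.totalDegree ≤ 2)
    (hval : eval x₀ p = 1) :
    ∃ (a : ℝ) (b c : Fin d → ℝ) (W : Matrix (Fin d) (Fin d) ℝ),
      a + b ⬝ᵥ x₀ = 1 ∧ c + W *ᵥ x₀ = 0 ∧
      ∀ x, eval x p = (a + b ⬝ᵥ x) ^ 2 - ∑ k, (c + W *ᵥ x) k ^ 2 := by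
  obtain ⟨c, b, G, hG⟩ := exists_eval_eq_quadratic_of_totalDegree_le_two hdeg
  set ℓ := b + x₀ ᵥ* G + G *ᵥ x₀
  have hline : ∀ y (t : ℝ), eval (x₀ + t • y) p = (y ⬝ᵥ G *ᵥ y) * (t * t) + (ℓ ⬝ᵥ y) * t + 1 :=
    fun y t => by rw [hG, quadratic_add_smul, ← hG, hval]
  have hS : ∀ y, y ⬝ᵥ ((4⁻¹ : ℝ) • vecMulVec ℓ ℓ - G) *ᵥ y = (ℓ ⬝ᵥ y) ^ 2 / 4 - y ⬝ᵥ G *ᵥ y :=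
    fun y => by
      simp only [sub_mulVec, smul_mulVec, vecMulVec_mulVec, dotProduct_sub, dotProduct_smul,
        op_smul_eq_smul, smul_eq_mul, dotProduct_comm y ℓ]
      ring
  obtain ⟨B, hB⟩ := exists_dotProduct_mulVec_eq_dotProduct_self _ fun y => by
    have := hRZ.discrim_nonneg (hline y)
    rw [discrim] at this
    rw [hS]
    linarith
  refine ⟨1 - ((2⁻¹ : ℝ) • ℓ) ⬝ᵥ x₀, (2⁻¹ : ℝ) • ℓ, -(B *ᵥ x₀), B, by ring, by simp,
    fun x => ?_⟩
  have hx := hline (x - x₀) 1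
  rw [one_smul, add_sub_cancel] at hx
  have hu : 1 - ((2⁻¹ : ℝ) • ℓ) ⬝ᵥ x₀ + ((2⁻¹ : ℝ) • ℓ) ⬝ᵥ x = 1 + ℓ ⬝ᵥ (x - x₀) / 2 := by
    simp only [smul_dotProduct, dotProduct_sub, smul_eq_mul]
    ring
  have hv : -(B *ᵥ x₀) + B *ᵥ x = B *ᵥ (x - x₀) := by
    rw [mulVec_sub]
    abel
  have hsum : ∑ k, (B *ᵥ (x - x₀)) k ^ 2 = B *ᵥ (x - x₀) ⬝ᵥ B *ᵥ (x - x₀) := by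
    simp [dotProduct, sq]
  rw [hu, hv, hsum, ← hB, hS, hx]
  ring

end IsRZ

section Clifford

variable {ι R A : Type*} [CommRing R] [Ring A] [Algebra R A]

structure IsCliffordSystem (E : ι → A) : Prop where
  mul_self : ∀ i, E i * E i = 1
  anticomm : Pairwise fun i j => E i * E j = -(E j * E i)

def cliffordPencil [Fintype ι] (E : ι → A) (u : R) (v : ι → R) : A :=
  u • 1 + ∑ k, v k • E k

namespace IsCliffordSystem

variable {E : ι → A}

theorem tail {m : ℕ} {E : Fin (m + 1) → A} (hE : IsCliffordSystem E) :
    IsCliffordSystem (Fin.tail E) :=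
  ⟨fun i => hE.mul_self i.succ, fun _ _ hij => hE.anticomm ((Fin.succ_injective _).ne hij)⟩

theorem sum_smul_mul_self (hE : IsCliffordSystem E) (v : ι → R) (s : Finset ι) :
    (∑ k ∈ s, v k • E k) * (∑ k ∈ s, v k • E k) = (∑ k ∈ s, v k ^ 2) • 1 := by
  classical
  induction s using Finset.induction_on with
  | empty => simp
  | insert a s ha ih =>
    have hcross : E a * (∑ k ∈ s, v k • E k) + (∑ k ∈ s, v k • E k) * E a = 0 := by
      rw [Finset.mul_sum, Finset.sum_mul, ← Finset.sum_add_distrib]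
      refine Finset.sum_eq_zero fun k hk => ?_
      rw [mul_smul_comm, smul_mul_assoc, ← smul_add,
        hE.anticomm (ne_of_mem_of_not_mem hk ha).symm, neg_add_cancel, smul_zero]
    rw [Finset.sum_insert ha, Finset.sum_insert ha, add_smul, ← ih]
    calc (v a • E a + ∑ k ∈ s, v k • E k) * (v a • E a + ∑ k ∈ s, v k • E k)
        = v a ^ 2 • (E a * E a) + v a • (E a * (∑ k ∈ s, v k • E k)
            + (∑ k ∈ s, v k • E k) * E a) + (∑ k ∈ s, v k • E k) * (∑ k ∈ s, v k • E k) := by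
          simp only [add_mul, mul_add, smul_mul_assoc, mul_smul_comm, smul_smul, smul_add, sq]
          abel
      _ = _ := by rw [hE.mul_self, hcross, smul_zero, add_zero]

theorem cliffordPencil_mul_neg [Fintype ι] (hE : IsCliffordSystem E) (u : R) (v : ι → R) :
    cliffordPencil E u v * cliffordPencil E u (-v) = (u ^ 2 - ∑ k, v k ^ 2) • 1 := by
  simp only [cliffordPencil, Pi.neg_apply, neg_smul, Finset.sum_neg_distrib, ← sub_eq_add_neg]
  rw [mul_sub, add_mul, add_mul, hE.sum_smul_mul_self, smul_mul_smul_comm, mul_one,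
    smul_mul_assoc, one_mul, mul_smul_comm, mul_one, sub_smul, sq]
  abel

end IsCliffordSystem

theorem mul_cliffordPencil_of_anticomm [Fintype ι] {E : ι → A} {T : A}
    (hT : ∀ k, T * E k = -(E k * T)) (u : R) (v : ι → R) :
    T * cliffordPencil E u v = cliffordPencil E u (-v) * T := by
  simp only [cliffordPencil, mul_add, add_mul, Finset.mul_sum, Finset.sum_mul, mul_smul_comm,
    smul_mul_assoc, hT, mul_one, one_mul, Pi.neg_apply, neg_smul, smul_neg, neg_mul]

theorem cliffordPencil_add_sum_smul {σ : Type*} [Fintype ι] [Fintype σ] (E : ι → A) (a : R)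
    (b : σ → R) (c : ι → R) (W : Matrix ι σ R) (x : σ → R) :
    cliffordPencil E a c + ∑ i, x i • cliffordPencil E (b i) (fun k => W k i)
      = cliffordPencil E (a + b ⬝ᵥ x) (c + W *ᵥ x) := by
  simp only [cliffordPencil, smul_add, Finset.smul_sum, smul_smul, Finset.sum_add_distrib,
    add_smul, Pi.add_apply, mulVec, dotProduct, Finset.sum_smul]
  rw [Finset.sum_comm (f := fun i k => (x i * W k i) • E k)]
  simp only [mul_comm]
  abel

end Clifford

section Pauli

variable {R : Type*} [CommRing R]

def pauliX : Matrix (Fin 2) (Fin 2) R := !![0, 1; 1, 0]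

def pauliZ : Matrix (Fin 2) (Fin 2) R := !![1, 0; 0, -1]

theorem pauliX_mul_self : (pauliX : Matrix (Fin 2) (Fin 2) R) * pauliX = 1 := by
  simp [pauliX, one_fin_two]

theorem pauliZ_mul_self : (pauliZ : Matrix (Fin 2) (Fin 2) R) * pauliZ = 1 := by
  simp [pauliZ, one_fin_two]

theorem pauliX_mul_pauliZ : (pauliX : Matrix (Fin 2) (Fin 2) R) * pauliZ = -(pauliZ * pauliX) := by
  simp [pauliX, pauliZ]

theorem isSymm_pauliX : (pauliX : Matrix (Fin 2) (Fin 2) R).IsSymm :=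
  IsSymm.ext fun i j => by fin_cases i <;> fin_cases j <;> rfl

theorem isSymm_pauliZ : (pauliZ : Matrix (Fin 2) (Fin 2) R).IsSymm :=
  IsSymm.ext fun i j => by fin_cases i <;> fin_cases j <;> rfl

end Pauli

section Matrices

variable {n R : Type*} [Fintype n] [DecidableEq n] [CommRing R]

theorem IsCliffordSystem.det_cliffordPencil_tail_sq {m : ℕ} {E : Fin (m + 1) → Matrix n n R}
    (hE : IsCliffordSystem E) (u : R) (v : Fin m → R) :
    (cliffordPencil (Fin.tail E) u v).det ^ 2 = (u ^ 2 - ∑ k, v k ^ 2) ^ Fintype.card n := by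
  have hT : ∀ k, E 0 * Fin.tail E k = -(Fin.tail E k * E 0) := fun k =>
    hE.anticomm (Fin.succ_ne_zero k).symm
  have hdetT : (E 0).det * (E 0).det = 1 := by rw [← det_mul, hE.mul_self, det_one]
  have hconj :
      (cliffordPencil (Fin.tail E) u v).det = (cliffordPencil (Fin.tail E) u (-v)).det := by
    have h := congrArg det (mul_cliffordPencil_of_anticomm hT u v)
    rw [det_mul, det_mul] at h
    -- cancel the unit `det (E 0)` from `det (E 0) * det M = det M' * det (E 0)`
    linear_combination (E 0).det * h
      + ((cliffordPencil (Fin.tail E) u (-v)).det - (cliffordPencil (Fin.tail E) u v).det) * hdetT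
  calc (cliffordPencil (Fin.tail E) u v).det ^ 2
      = (cliffordPencil (Fin.tail E) u v * cliffordPencil (Fin.tail E) u (-v)).det := by
        rw [det_mul, ← hconj, sq]
    _ = (u ^ 2 - ∑ k, v k ^ 2) ^ Fintype.card n := by
        rw [hE.tail.cliffordPencil_mul_neg, det_smul, det_one, mul_one]

theorem Matrix.IsSymm.cliffordPencil {ι : Type*} [Fintype ι] {E : ι → Matrix n n R}
    (hE : ∀ k, (E k).IsSymm) (u : R) (v : ι → R) : (cliffordPencil E u v).IsSymm := by
  simp only [_root_.cliffordPencil, IsSymm, transpose_add, transpose_smul, transpose_one,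
    transpose_sum, (hE _).eq]

theorem IsCliffordSystem.submatrix {ι m : Type*} [Fintype m] [DecidableEq m]
    {E : ι → Matrix n n R} (hE : IsCliffordSystem E) (e : m ≃ n) :
    IsCliffordSystem fun i => (E i).submatrix e e :=
  ⟨fun i => by rw [submatrix_mul_equiv, hE.mul_self, submatrix_one_equiv],
    fun i j hij => by
      dsimp only
      rw [submatrix_mul_equiv, submatrix_mul_equiv, hE.anticomm hij]
      rfl⟩

theorem IsCliffordSystem.cons_pauli_kronecker {m : ℕ} {E : Fin m → Matrix n n R}
    (hE : IsCliffordSystem E) :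
    IsCliffordSystem (Fin.cons (pauliX ⊗ₖ (1 : Matrix n n R)) fun i => pauliZ ⊗ₖ E i :
      Fin (m + 1) → Matrix (Fin 2 × n) (Fin 2 × n) R) := by
  refine ⟨fun i => ?_, fun i j hij => ?_⟩
  · cases i using Fin.cases <;>
      simp [← mul_kronecker_mul, pauliX_mul_self, pauliZ_mul_self, hE.mul_self]
  · cases i using Fin.cases <;> cases j using Fin.cases
    · exact absurd rfl hij
    · ext
      simp [← mul_kronecker_mul, pauliX_mul_pauliZ]
    · ext
      simp [← mul_kronecker_mul, pauliX_mul_pauliZ]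
    · ext
      simp [← mul_kronecker_mul, pauliZ_mul_self, hE.anticomm ((Fin.succ_injective _).ne_iff.1 hij)]

theorem exists_isCliffordSystem_isSymm (m : ℕ) :
    ∃ r, 0 < r ∧ ∃ E : Fin (m + 1) → Matrix (Fin (2 * r)) (Fin (2 * r)) R,
      (∀ i, (E i).IsSymm) ∧ IsCliffordSystem E := by
  induction m with
  | zero => exact ⟨1, one_pos, fun _ => 1, fun _ => isSymm_one,
      ⟨fun _ => mul_one 1, fun i j hij => (hij (Subsingleton.elim (α := Fin 1) i j)).elim⟩⟩
  | succ m ih =>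
    obtain ⟨r, hr, E, hsymm, hE⟩ := ih
    refine ⟨2 * r, by positivity, _, fun i => ?_,
      hE.cons_pauli_kronecker.submatrix finProdFinEquiv.symm⟩
    refine IsSymm.submatrix ?_ _
    cases i using Fin.cases
    · rw [Fin.cons_zero, IsSymm, ← kroneckerMap_transpose, isSymm_pauliX.eq, transpose_one]
    · rw [Fin.cons_succ, IsSymm, ← kroneckerMap_transpose, isSymm_pauliZ.eq, (hsymm _).eq]

end Matrices

theorem eval_det_of_C_add_sum_X_mul_C {σ n R : Type*} [Fintype σ] [Fintype n] [DecidableEq n]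
    [CommRing R] (A₀ : Matrix n n R) (A : σ → Matrix n n R) (x : σ → R) :
    eval x (Matrix.of fun k l => C (A₀ k l) + ∑ i, X i * C (A i k l)).det
      = (A₀ + ∑ i, x i • A i).det := by
  rw [RingHom.map_det]
  congr 1
  ext k l
  simp [Matrix.sum_apply, mul_comm]

open MvPolynomial in
/-- For every `RZ_{x⁰}` polynomial `p` of degree 2 with `p(x⁰) = 1` there are `r ≥ 1`
and real symmetric matrices `A_0, …, A_d` of size `n = 2r` with
`A_0 + x⁰_1 A_1 + ⋯ + x⁰_d A_d = I` and `det(A_0 + x_1 A_1 + ⋯ + x_d A_d) = p^r`. -/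
theorem stmt12 {d : ℕ} (p : MvPolynomial (Fin d) ℝ) (x0 : Fin d → ℝ)
    (hdeg : p.totalDegree = 2) (hRZ : IsRZ p x0)
    (hval : MvPolynomial.eval x0 p = 1) :
    ∃ r : ℕ, 0 < r ∧
      ∃ (A0 : Matrix (Fin (2 * r)) (Fin (2 * r)) ℝ)
        (A : Fin d → Matrix (Fin (2 * r)) (Fin (2 * r)) ℝ),
        A0.IsSymm ∧ (∀ i, (A i).IsSymm) ∧
        A0 + ∑ i, x0 i • A i = 1 ∧
        Matrix.det (Matrix.of fun k l =>
          C (A0 k l) + ∑ i, X i * C (A i k l)) = p ^ r := by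
  obtain ⟨a, b, c, W, hx0a, hx0c, hp⟩ := hRZ.exists_eval_eq_sq_sub_sum_sq hdeg.le hval
  obtain ⟨r, hr, E, hsymm, hE⟩ := exists_isCliffordSystem_isSymm (R := ℝ) d
  have hsymm' : ∀ k, (Fin.tail E k).IsSymm := fun k => hsymm k.succ
  refine ⟨r, hr, cliffordPencil (Fin.tail E) a c,
    fun i => cliffordPencil (Fin.tail E) (b i) fun k => W k i, .cliffordPencil hsymm' _ _,
    fun i => .cliffordPencil hsymm' _ _, ?_, ?_⟩
  · rw [cliffordPencil_add_sum_smul, hx0a, hx0c]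
    simp [cliffordPencil]
  have hsq : (Matrix.of fun k l => C (cliffordPencil (Fin.tail E) a c k l)
      + ∑ i, X i * C (cliffordPencil (Fin.tail E) (b i) (fun k => W k i) k l)).det ^ 2
      = (p ^ r) ^ 2 := MvPolynomial.funext fun x => by
    rw [map_pow, eval_det_of_C_add_sum_X_mul_C, cliffordPencil_add_sum_smul,
      hE.det_cliffordPencil_tail_sq, map_pow, map_pow, hp, Fintype.card_fin, ← pow_mul, mul_comm]
  rcases sq_eq_sq_iff_eq_or_eq_neg.1 hsq with h | h
  · exact h
  · have h1 := congrArg (eval x0) h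
    rw [eval_det_of_C_add_sum_X_mul_C, cliffordPencil_add_sum_smul, hx0a, hx0c, map_neg, map_pow,
      hval] at h1
    norm_num [cliffordPencil] at h1
end

section
/- Let A_0, A_1, …, A_d be complex m×m matrices, let U = X_0 A_0 + ⋯ + X_d A_d, suppose P = det U ∈ ℂ[X_0,…,X_d] is a nonzero squarefree polynomial, and let V = adj U. Fix X⁰ ∈ ℂ^{d+1} and let P'_{X⁰} = Σ_{α=0}^{d} X⁰_α · ∂P/∂X_α be the directional derivative of P in the direction X⁰. Then for all indices i, j, the polynomial Σ_{k,l=1}^{m} V_{ik} · (U(X⁰))_{kl} · V_{lj} − V_{ij} · P'_{X⁰} is divisible by P; equivalently, G_i U(X⁰) F_j = V_{ij} P'_{X⁰} at every point X ∈ ℂ^{d+1} with P(X) = 0, where G_i is the i-th row and F_j the j-th column of V and U(X⁰) = X⁰_0 A_0 + ⋯ + X⁰_d A_d. -/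
/-!
Let `D` be the derivation `Σ_α X⁰_α ∂/∂X_α`. Since `U` is linear in `X`, applying `D` entrywise to
`U` gives the constant matrix `U(X⁰)`, and `D P = P'_{X⁰}`. Differentiating `U · V = P · I` gives
`D U · V + U · D V = D P · I`; multiplying on the left by `V` and using `V · U = P · I` yields
`V · U(X⁰) · V - P'_{X⁰} · V = -P · D V`, an explicit multiple of `P`.
-/

open MvPolynomial Matrix

namespace Matrix

variable {R A n : Type*} [CommRing R] [CommRing A] [Algebra R A] [Fintype n]

theorem map_derivation_mul (D : Derivation R A A) (M N : Matrix n n A) :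
    (M * N).map D = M.map D * N + M * N.map D := by
  ext i j
  simp only [map_apply, mul_apply, add_apply, map_sum, Derivation.leibniz, smul_eq_mul,
    ← Finset.sum_add_distrib]
  exact Finset.sum_congr rfl fun _ _ => by ring

theorem adjugate_mul_map_derivation_mul_adjugate [DecidableEq n] (D : Derivation R A A)
    (M : Matrix n n A) :
    M.adjugate * M.map D * M.adjugate = D M.det • M.adjugate - M.det • M.adjugate.map D := by
  have h : M.map D * M.adjugate + M * M.adjugate.map D = D M.det • (1 : Matrix n n A) := by
    rw [← map_derivation_mul, mul_adjugate, smul_one_eq_diagonal, smul_one_eq_diagonal,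
      diagonal_map (map_zero D)]
  have h' := congrArg (M.adjugate * ·) h
  simp only [Matrix.mul_add, ← Matrix.mul_assoc, adjugate_mul, Matrix.smul_mul,
    Matrix.one_mul, Matrix.mul_smul, Matrix.mul_one] at h'
  rw [← h', add_sub_cancel_right]

end Matrix

namespace MvPolynomial

variable {R σ : Type*} [CommRing R] [Fintype σ]

noncomputable def directionalDeriv (v : σ → R) :
    Derivation R (MvPolynomial σ R) (MvPolynomial σ R) :=
  ∑ α, v α • pderiv α

theorem directionalDeriv_apply (v : σ → R) (f : MvPolynomial σ R) :
    directionalDeriv v f = ∑ α, C (v α) * pderiv α f := by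
  change Derivation.coeFnAddMonoidHom (∑ α, v α • pderiv α) f = _
  simp only [map_sum, Finset.sum_apply, Derivation.coeFnAddMonoidHom_apply, Derivation.smul_apply,
    smul_eq_C_mul]

theorem directionalDeriv_X (v : σ → R) (β : σ) : directionalDeriv v (X β) = C (v β) := by
  classical
  simp [directionalDeriv_apply, pderiv_X, Pi.single_apply]

theorem directionalDeriv_linear (v a : σ → R) :
    directionalDeriv v (∑ β, X β * C (a β)) = C (∑ β, v β * a β) := by
  simp only [map_sum, Derivation.leibniz, derivation_C, directionalDeriv_X, smul_eq_mul, mul_zero,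
    zero_add, C_mul, mul_comm]

end MvPolynomial

open MvPolynomial in
theorem stmt16_general {d m : ℕ} (A : Fin (d + 1) → Matrix (Fin m) (Fin m) ℂ)
    (U : Matrix (Fin m) (Fin m) (MvPolynomial (Fin (d + 1)) ℂ))
    (hU : U = Matrix.of fun k l => ∑ β, X β * C (A β k l))
    (X0 : Fin (d + 1) → ℂ) (i j : Fin m) :
    U.det ∣
      ((∑ k, ∑ l, U.adjugate i k * C ((∑ α, X0 α • A α) k l) * U.adjugate l j) -
        U.adjugate i j * ∑ α, C (X0 α) * MvPolynomial.pderiv α U.det) := by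
  have hUX0 : U.map (directionalDeriv X0) = (∑ α, X0 α • A α).map C := by
    refine Matrix.ext fun k l => ?_
    simp only [hU, map_apply, of_apply, directionalDeriv_linear, Matrix.sum_apply, Matrix.smul_apply,
      smul_eq_mul]
  have hij := congrFun (congrFun
    (adjugate_mul_map_derivation_mul_adjugate (directionalDeriv X0) U) i) j
  rw [hUX0] at hij
  simp only [mul_apply, map_apply, Finset.sum_mul, Matrix.smul_apply, Matrix.sub_apply,
    smul_eq_mul] at hij
  refine ⟨-directionalDeriv X0 (U.adjugate i j), ?_⟩
  rw [← directionalDeriv_apply, Finset.sum_comm, hij]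
  ring

open MvPolynomial in
/-- For `U = X_0 A_0 + ⋯ + X_d A_d` with `P = det U` nonzero squarefree,
`V = adj U`, and a direction `X⁰ ∈ ℂ^{d+1}` with directional derivative
`P'_{X⁰} = Σ_α X⁰_α ∂P/∂X_α`, the polynomial
`Σ_{k,l} V_{ik} (U(X⁰))_{kl} V_{lj} − V_{ij} P'_{X⁰}` is divisible by `P`
for all `i, j`. -/
theorem stmt16 {d m : ℕ} (A : Fin (d + 1) → Matrix (Fin m) (Fin m) ℂ)
    (U : Matrix (Fin m) (Fin m) (MvPolynomial (Fin (d + 1)) ℂ))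
    (hU : U = Matrix.of fun k l => ∑ β, X β * C (A β k l))
    (hP0 : U.det ≠ 0) (hPsf : Squarefree U.det)
    (X0 : Fin (d + 1) → ℂ) (i j : Fin m) :
    U.det ∣
      ((∑ k, ∑ l, U.adjugate i k * C ((∑ α, X0 α • A α) k l) * U.adjugate l j) -
        U.adjugate i j * ∑ α, C (X0 α) * MvPolynomial.pderiv α U.det) :=
  stmt16_general A U hU X0 i j
end

section
/- Let B and C be complex Hermitian n×n matrices and suppose the univariate polynomial q(s) = det(C − sB) has n distinct real zeroes s_1, …, s_n. Then ℂ^n is the direct sum of the kernels ker(C − s_1 B), …, ker(C − s_n B), and these kernels are mutually B-orthogonal: if v_i ∈ ker(C − s_i B) and v_j ∈ ker(C − s_j B) with i ≠ j, then v_j* B v_i = 0. -/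
open Matrix Polynomial in
private lemma stmt17_aux {ι V : Type*} [Fintype ι] [AddCommGroup V] [Module ℂ V]
    {E : ι → Submodule ℂ V} (h : iSupIndep E) {g : ι → V}
    (hg : ∀ i, g i ∈ E i) (hsum : ∑ i, g i = 0) (j : ι) : g j = 0 := by
  classical
  have hmem : -∑ i ∈ Finset.univ.erase j, g i ∈ ⨆ (i) (_ : i ≠ j), E i := by
    refine neg_mem (Submodule.sum_mem _ fun i hi => ?_)
    exact Submodule.mem_iSup_of_mem i
      (Submodule.mem_iSup_of_mem (Finset.ne_of_mem_erase hi) (hg i))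
  have hjeq : g j = -∑ i ∈ Finset.univ.erase j, g i := by
    rw [eq_neg_iff_add_eq_zero, Finset.add_sum_erase Finset.univ g (Finset.mem_univ j)]
    exact hsum
  exact Submodule.disjoint_def.mp (h j) (g j) (hg j) (hjeq ▸ hmem)

open Matrix in
/-- If `B, C` are Hermitian and `q(s) = det(C − sB)` has `n` distinct real zeroes
`s_1, …, s_n`, then `ℂ^n` is the direct sum of the kernels `ker(C − s_i B)`
(every vector decomposes uniquely as a sum of elements of these kernels), and the
kernels are mutually `B`-orthogonal. -/
theorem stmt17 {n : ℕ} (B C : Matrix (Fin n) (Fin n) ℂ)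
    (hB : B.IsHermitian) (hC : C.IsHermitian) (s : Fin n → ℝ)
    (hs : Function.Injective s)
    (hroots : (Matrix.det (C.map Polynomial.C -
        (Polynomial.X : Polynomial ℂ) • B.map Polynomial.C)).roots =
      Multiset.map (fun i => ((s i : ℝ) : ℂ)) Finset.univ.val) :
    (∀ v : Fin n → ℂ, ∃! f : Fin n → (Fin n → ℂ),
      (∀ i, (C - (s i : ℂ) • B) *ᵥ f i = 0) ∧ ∑ i, f i = v) ∧
    (∀ i j : Fin n, i ≠ j → ∀ vi vj : Fin n → ℂ,
      (C - (s i : ℂ) • B) *ᵥ vi = 0 → (C - (s j : ℂ) • B) *ᵥ vj = 0 →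
      star vj ⬝ᵥ B *ᵥ vi = 0) := by
  classical
  open Polynomial in
  constructor
  · -- direct sum decomposition
    set p : Polynomial ℂ := Matrix.det (C.map Polynomial.C -
        (Polynomial.X : Polynomial ℂ) • B.map Polynomial.C) with hp
    have hform : (C.map (Polynomial.C (R := ℂ)) - (Polynomial.X : Polynomial ℂ) • B.map Polynomial.C)
        = (Polynomial.X : Polynomial ℂ) • (-B).map Polynomial.C + C.map Polynomial.C := by
      ext i j
      simp [Matrix.map_apply, sub_eq_neg_add, mul_neg]
    have hcard : Multiset.card p.roots = n := by rw [hroots]; simp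
    have hp0 : p ≠ 0 := by
      intro h
      have hn : n = 0 := by simpa [h] using hcard.symm
      have : IsEmpty (Fin n) := by rw [hn]; infer_instance
      rw [hp, Matrix.det_isEmpty] at h
      exact one_ne_zero h
    have hdegle : p.natDegree ≤ n := by
      rw [hp, hform]
      simpa using Polynomial.natDegree_det_X_add_C_le (-B) C
    have hdeg : p.natDegree = n :=
      le_antisymm hdegle (hcard ▸ p.card_roots')
    have hcoeff : p.coeff n = (-1) ^ n * B.det := by
      rw [hp, hform]
      simpa [Matrix.det_neg] using Polynomial.coeff_det_X_add_C_card (-B) C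
    have hdetB : B.det ≠ 0 := by
      have hl : p.coeff n ≠ 0 := by
        rw [← hdeg]
        exact Polynomial.leadingCoeff_ne_zero.mpr hp0
      intro h
      apply hl
      rw [hcoeff, h, mul_zero]
    have hU : IsUnit B.det := isUnit_iff_ne_zero.mpr hdetB
    set A := B⁻¹ * C with hA
    have hequiv : ∀ (μ : ℂ) (v : Fin n → ℂ), (C - μ • B) *ᵥ v = 0 ↔ A *ᵥ v = μ • v := by
      intro μ v
      rw [Matrix.sub_mulVec, sub_eq_zero, Matrix.smul_mulVec]
      constructor
      · intro h
        calc A *ᵥ v = B⁻¹ *ᵥ C *ᵥ v := by rw [Matrix.mulVec_mulVec]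
        _ = B⁻¹ *ᵥ (μ • B *ᵥ v) := by rw [h]
        _ = μ • (B⁻¹ *ᵥ B *ᵥ v) := Matrix.mulVec_smul _ _ _
        _ = μ • v := by rw [Matrix.mulVec_mulVec, Matrix.nonsing_inv_mul B hU, Matrix.one_mulVec]
      · intro h
        calc C *ᵥ v = (B * A) *ᵥ v := by rw [hA, Matrix.mul_nonsing_inv_cancel_left B C hU]
        _ = B *ᵥ A *ᵥ v := by rw [Matrix.mulVec_mulVec]
        _ = B *ᵥ (μ • v) := by rw [h]
        _ = μ • B *ᵥ v := Matrix.mulVec_smul _ _ _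
    have heval : ∀ μ : ℂ, p.eval μ = Matrix.det (C - μ • B) := by
      intro μ
      have h1 := RingHom.map_det (Polynomial.evalRingHom μ)
        (C.map Polynomial.C - (Polynomial.X : Polynomial ℂ) • B.map Polynomial.C)
      have h2 : (Polynomial.evalRingHom μ).mapMatrix
          (C.map Polynomial.C - (Polynomial.X : Polynomial ℂ) • B.map Polynomial.C)
          = C - μ • B := by
        ext i j
        simp [Matrix.map_apply]
        ring
      rw [hp]
      simpa [h2] using h1
    have hker : ∀ i : Fin n, ∃ v, v ≠ 0 ∧ (C - ((s i : ℝ) : ℂ) • B) *ᵥ v = 0 := by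
      intro i
      have hroot : ((s i : ℝ) : ℂ) ∈ p.roots := by
        rw [hroots]
        exact Multiset.mem_map_of_mem _ (Finset.mem_univ_val i)
      have hdet0 : Matrix.det (C - ((s i : ℝ) : ℂ) • B) = 0 := by
        rw [← heval]
        exact (Polynomial.mem_roots hp0).mp hroot
      exact Matrix.exists_mulVec_eq_zero_iff.mpr hdet0
    set f : Module.End ℂ (Fin n → ℂ) := Matrix.mulVecLin A with hf
    set μ : Fin n → ℂ := fun i => ((s i : ℝ) : ℂ) with hμ
    have hμinj : Function.Injective μ := fun i j h => hs (Complex.ofReal_inj.mp h)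
    have hmem : ∀ (i : Fin n) (v : Fin n → ℂ),
        (C - μ i • B) *ᵥ v = 0 ↔ v ∈ f.eigenspace (μ i) := by
      intro i v
      rw [Module.End.mem_eigenspace_iff, hequiv]
      simp [hf]
    choose ev hev0 hevk using hker
    have hevE : ∀ i, ev i ∈ f.eigenspace (μ i) := fun i => (hmem i (ev i)).mp (hevk i)
    have hli : LinearIndependent ℂ ev :=
      Module.End.eigenvectors_linearIndependent' f μ hμinj ev (fun i => ⟨hevE i, hev0 i⟩)
    have htop : ⨆ i, f.eigenspace (μ i) = ⊤ := by
      rcases Nat.eq_zero_or_pos n with hn | hn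
      · rw [eq_top_iff]
        intro x _
        have : x = 0 := by
          funext i
          exact absurd (i.2.trans_eq hn) (Nat.not_lt_zero _)
        rw [this]
        exact zero_mem _
      · have : Nonempty (Fin n) := ⟨⟨0, hn⟩⟩
        have hspan : Submodule.span ℂ (Set.range ev) = ⊤ := by
          have h1 := (basisOfLinearIndependentOfCardEqFinrank hli
            (by simp [Module.finrank_fin_fun])).span_eq
          rwa [coe_basisOfLinearIndependentOfCardEqFinrank] at h1
        rw [eq_top_iff, ← hspan]
        refine Submodule.span_le.mpr ?_
        rintro x ⟨i, rfl⟩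
        exact Submodule.mem_iSup_of_mem i (hevE i)
    have hindep : iSupIndep (fun i : Fin n => f.eigenspace (μ i)) :=
      (f.eigenspaces_iSupIndep).comp hμinj
    intro w
    have hw : w ∈ ⨆ i, f.eigenspace (μ i) := htop ▸ Submodule.mem_top
    rw [Submodule.mem_iSup_iff_exists_finsupp] at hw
    obtain ⟨g, hg, hgsum⟩ := hw
    have hgsum' : ∑ k, (g k : Fin n → ℂ) = w := by
      rw [← hgsum]
      exact (Finsupp.sum_fintype g (fun _ x => x) (fun _ => rfl)).symm
    refine ⟨fun i => g i, ⟨fun i => (hmem i _).mpr (hg i), hgsum'⟩, ?_⟩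
    rintro g' ⟨hg', hg'sum⟩
    funext i
    have hd : ∀ k, g' k - g k ∈ f.eigenspace (μ k) :=
      fun k => Submodule.sub_mem _ ((hmem k _).mp (hg' k)) (hg k)
    have hdsum : ∑ k, (g' k - g k) = 0 := by
      rw [Finset.sum_sub_distrib, hg'sum, hgsum', sub_self]
    exact sub_eq_zero.mp (stmt17_aux hindep hd hdsum i)
  · -- B-orthogonality
    intro i j hij vi vj hvi hvj
    have hCi : C *ᵥ vi = ((s i : ℝ) : ℂ) • B *ᵥ vi := by
      rw [Matrix.sub_mulVec, sub_eq_zero, Matrix.smul_mulVec] at hvi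
      exact hvi
    have hCj : C *ᵥ vj = ((s j : ℝ) : ℂ) • B *ᵥ vj := by
      rw [Matrix.sub_mulVec, sub_eq_zero, Matrix.smul_mulVec] at hvj
      exact hvj
    have key : ((s i : ℝ) : ℂ) * (star vj ⬝ᵥ B *ᵥ vi)
        = ((s j : ℝ) : ℂ) * (star vj ⬝ᵥ B *ᵥ vi) := by
      calc ((s i : ℝ) : ℂ) * (star vj ⬝ᵥ B *ᵥ vi)
          = star vj ⬝ᵥ C *ᵥ vi := by
            rw [hCi, dotProduct_smul, smul_eq_mul]
        _ = star (C *ᵥ vj) ⬝ᵥ vi := by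
            rw [Matrix.star_mulVec, hC.eq, Matrix.dotProduct_mulVec]
        _ = star (((s j : ℝ) : ℂ) • B *ᵥ vj) ⬝ᵥ vi := by rw [hCj]
        _ = ((s j : ℝ) : ℂ) * (star (B *ᵥ vj) ⬝ᵥ vi) := by
            rw [star_smul, smul_dotProduct, smul_eq_mul, Complex.star_def,
              Complex.conj_ofReal]
        _ = ((s j : ℝ) : ℂ) * (star vj ⬝ᵥ B *ᵥ vi) := by
            rw [Matrix.star_mulVec, hB.eq, Matrix.dotProduct_mulVec]
    have hzero : (((s i : ℝ) : ℂ) - ((s j : ℝ) : ℂ)) * (star vj ⬝ᵥ B *ᵥ vi) = 0 := by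
      rw [sub_mul, key, sub_self]
    have hne : (((s i : ℝ) : ℂ) - ((s j : ℝ) : ℂ)) ≠ 0 := by
      rw [sub_ne_zero]
      exact fun h => hij (hs (by exact_mod_cast h))
    exact (mul_eq_zero.mp hzero).resolve_left hne
end

section
/- Let B and C be complex Hermitian n×n matrices and suppose the univariate polynomial q(s) = det(C − sB) has n distinct real zeroes s_1, …, s_n. Then B is positive definite if and only if for each i = 1, …, n the compression of B to ker(C − s_i B) is positive definite, i.e., v* B v > 0 for every nonzero v ∈ ker(C − s_i B). -/
/-!
Every `s i` is a root of `q`, so `C - s i • B` is singular and has a kernel vector `v i ≠ 0`.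
For a Hermitian pencil, kernel vectors belonging to distinct real parameters are `B`-orthogonal,
so with `V` the matrix whose columns are the `v i`, `Vᴴ B V` is the diagonal matrix of the
compressions `v iᴴ B v i`. When these are positive, `Vᴴ B V` is nonsingular, hence so is `V`, and
`B` is congruent to a positive diagonal matrix.
-/

open scoped ComplexOrder
open Matrix Polynomial

theorem Polynomial.eval_det_map_C_sub_X_smul {n R : Type*} [Fintype n] [DecidableEq n]
    [CommRing R] (B C : Matrix n n R) (a : R) :
    (det (C.map Polynomial.C - (X : R[X]) • B.map Polynomial.C)).eval a = det (C - a • B) := by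
  rw [← coe_evalRingHom, RingHom.map_det]
  congr 1
  ext i j
  simp [mul_comm _ a]

theorem Matrix.PosDef.of_orthogonal_family {n K : Type*} [Fintype n] [DecidableEq n] [Field K]
    [PartialOrder K] [StarRing K] [StarOrderedRing K] {B : Matrix n n K} (v : n → n → K)
    (horth : Pairwise fun i j => star (v i) ⬝ᵥ B *ᵥ v j = 0)
    (hpos : ∀ i, 0 < star (v i) ⬝ᵥ B *ᵥ v i) : B.PosDef := by
  set V : Matrix n n K := (of v)ᵀ
  have hdiag : star V * B * V = diagonal fun i => star (v i) ⬝ᵥ B *ᵥ v i := by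
    ext i j
    rw [mul_mul_apply]
    change star (v i) ⬝ᵥ B *ᵥ v j = _
    rcases eq_or_ne i j with rfl | hij
    · rw [diagonal_apply_eq]
    · rw [diagonal_apply_ne _ hij, horth hij]
  have hV : IsUnit V := by
    rw [isUnit_iff_isUnit_det, isUnit_iff_ne_zero]
    intro h0
    have := congrArg det hdiag
    rw [det_mul, det_mul, h0, mul_zero, det_diagonal] at this
    exact Finset.prod_ne_zero_iff.2 (fun i _ => (hpos i).ne') this.symm
  rw [← hV.posDef_star_left_conjugate_iff, hdiag, posDef_diagonal_iff]
  exact hpos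

theorem Matrix.IsHermitian.star_dotProduct_mulVec_eq_zero_of_ne {n 𝕜 : Type*} [Fintype n]
    [RCLike 𝕜] {B C : Matrix n n 𝕜} (hB : B.IsHermitian) (hC : C.IsHermitian) {a b : ℝ}
    (hab : a ≠ b) {u w : n → 𝕜} (hu : (C - (a : 𝕜) • B) *ᵥ u = 0)
    (hw : (C - (b : 𝕜) • B) *ᵥ w = 0) :
    star u ⬝ᵥ B *ᵥ w = 0 := by
  rw [sub_mulVec, sub_eq_zero, smul_mulVec] at hu hw
  have h : (a : 𝕜) * (star u ⬝ᵥ B *ᵥ w) = b * (star u ⬝ᵥ B *ᵥ w) := calc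
    _ = star ((a : 𝕜) • B *ᵥ u) ⬝ᵥ w := by
      rw [star_smul, RCLike.star_def, RCLike.conj_ofReal, smul_dotProduct, star_mulVec, hB.eq,
        dotProduct_mulVec, smul_eq_mul]
    _ = star u ⬝ᵥ C *ᵥ w := by rw [← hu, star_mulVec, hC.eq, dotProduct_mulVec]
    _ = _ := by rw [hw, dotProduct_smul, smul_eq_mul]
  have hab' : (a : 𝕜) - b ≠ 0 := sub_ne_zero.2 (RCLike.ofReal_injective.ne hab)
  exact (mul_eq_zero.1 (by linear_combination h : ((a : 𝕜) - b) * _ = 0)).resolve_left hab'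

/-- If `B, C` are Hermitian and `q(s) = det(C − sB)` has `n` distinct real zeroes
`s_1, …, s_n`, then `B` is positive definite iff the compression of `B` to each
kernel `ker(C − s_i B)` is positive definite. -/
theorem stmt18 {n : ℕ} (B C : Matrix (Fin n) (Fin n) ℂ)
    (hB : B.IsHermitian) (hC : C.IsHermitian) (s : Fin n → ℝ)
    (hs : Function.Injective s)
    (hroots : (Matrix.det (C.map Polynomial.C -
        (Polynomial.X : Polynomial ℂ) • B.map Polynomial.C)).roots =
      Multiset.map (fun i => ((s i : ℝ) : ℂ)) Finset.univ.val) :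
    B.PosDef ↔
      ∀ i : Fin n, ∀ v : Fin n → ℂ, (C - (s i : ℂ) • B) *ᵥ v = 0 → v ≠ 0 →
        0 < (star v ⬝ᵥ B *ᵥ v).re := by
  refine ⟨fun hB_pos i v _ hv0 => (Complex.lt_def.1 (hB_pos.dotProduct_mulVec_pos hv0)).1,
    fun hcomp => ?_⟩
  have hsing (i : Fin n) : (C - (s i : ℂ) • B).det = 0 := by
    rw [← eval_det_map_C_sub_X_smul]
    exact (mem_roots'.1 (hroots ▸ Multiset.mem_map_of_mem _ (Finset.mem_univ_val i))).2
  choose v hv0 hv using fun i => exists_mulVec_eq_zero_iff.2 (hsing i)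
  refine PosDef.of_orthogonal_family v
    (fun i j hij => hB.star_dotProduct_mulVec_eq_zero_of_ne hC (hs.ne hij) (hv i) (hv j))
    fun i => Complex.lt_def.2 ⟨hcomp i (v i) (hv i) (hv0 i),
      (hB.im_star_dotProduct_mulVec_self (v i)).symm⟩
end
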